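/- arXiv:math/0301094 — 2 statements merged into one kernel-verified Lean document; each statement's English description precedes it below -/
import Mathlib

section
/- For all real numbers x and t, every k ≥ 1, and all positive integers n_1, …, n_k with n = n_1 + ⋯ + n_k, the product of Hermite polynomials satisfies ∏_{j=1}^k H_{n_j}(x,t) = Σ_{π ∈ 𝒫_{1,2}(n_1,…,n_k)} t^{s₂(π)} · H_{s(π)}(x,t), where the sum is over all inhomogeneous partitions of {1,…,n} whose blocks have at most two elements. -/
open Finset MeasureTheory ProbabilityTheory
open scoped Classical

noncomputable section

/-- Index of the interval block (w.r.t. the list of block sizes `ns`)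
containing position `i`. -/
def blockIdx (ns : List ℕ) (i : ℕ) : ℕ :=
  (List.range ns.length).countP (fun j => (ns.take (j + 1)).sum ≤ i)

/-- `P` is a set partition of `Fin n`. -/
def IsPartition {n : ℕ} (P : Finset (Finset (Fin n))) : Prop :=
  (∀ B ∈ P, B.Nonempty) ∧ (∀ i : Fin n, ∃ B ∈ P, i ∈ B) ∧
    ∀ B ∈ P, ∀ C ∈ P, ∀ i : Fin n, i ∈ B → i ∈ C → B = C

/-- `P` is inhomogeneous w.r.t. the interval partition with block sizes `ns`:
no block of `P` contains two distinct elements lying in the same interval block. -/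
def Inhom {n : ℕ} (ns : List ℕ) (P : Finset (Finset (Fin n))) : Prop :=
  ∀ B ∈ P, ∀ i ∈ B, ∀ j ∈ B, i ≠ j → blockIdx ns (i : ℕ) ≠ blockIdx ns (j : ℕ)

/-- `i` and `j` lie in the same block of `P`. -/
def SameBlock {n : ℕ} (P : Finset (Finset (Fin n))) (i j : Fin n) : Prop :=
  ∃ B ∈ P, i ∈ B ∧ j ∈ B

/-- `s(π)`: the number of singleton blocks. -/
def scount {n : ℕ} (P : Finset (Finset (Fin n))) : ℕ :=
  (P.filter fun B => B.card = 1).card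

/-- `s₂(π)`: the number of two-element blocks. -/
def s2count {n : ℕ} (P : Finset (Finset (Fin n))) : ℕ :=
  (P.filter fun B => B.card = 2).card

/-- `P` is a noncrossing partition: there are no `i < j < k < l` with `i,k` in one
block and `j,l` in a different block. -/
def Noncrossing {n : ℕ} (P : Finset (Finset (Fin n))) : Prop :=
  ¬ ∃ i j k l : Fin n, i < j ∧ j < k ∧ k < l ∧
      SameBlock P i k ∧ SameBlock P j l ∧ ¬ SameBlock P i j

/-- A block `B` is inner if some other block contains elements `a`, `b` with
`a < min B` and `max B < b`. -/
def IsInner {n : ℕ} (P : Finset (Finset (Fin n))) (B : Finset (Fin n)) : Prop :=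
  ∃ C ∈ P, C ≠ B ∧ ∃ a ∈ C, ∃ b ∈ C, ∀ x ∈ B, a < x ∧ x < b

/-- `i(π)`: the number of inner blocks. -/
def innerCount {n : ℕ} (P : Finset (Finset (Fin n))) : ℕ :=
  (P.filter fun B => IsInner P B).card

/-- `o(π)`: the number of outer blocks. -/
def outerCount {n : ℕ} (P : Finset (Finset (Fin n))) : ℕ :=
  (P.filter fun B => ¬ IsInner P B).card

/-- `si(π)`: the number of inner singleton blocks. -/
def siCount {n : ℕ} (P : Finset (Finset (Fin n))) : ℕ :=
  (P.filter fun B => B.card = 1 ∧ IsInner P B).card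

/-- `rc(π)`: the number of restricted crossings, i.e. of quadruples
`i < j < k < l` with `i ~ k`, `j ~ l`, `k = min {r > i : r ~ i}` and
`l = min {r > j : r ~ j}`. -/
def rc {n : ℕ} (P : Finset (Finset (Fin n))) : ℕ :=
  ((univ : Finset (Fin n × Fin n × Fin n × Fin n)).filter fun q =>
      q.1 < q.2.1 ∧ q.2.1 < q.2.2.1 ∧ q.2.2.1 < q.2.2.2 ∧
      SameBlock P q.1 q.2.2.1 ∧ SameBlock P q.2.1 q.2.2.2 ∧
      (∀ r : Fin n, q.1 < r → SameBlock P q.1 r → q.2.2.1 ≤ r) ∧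
      (∀ r : Fin n, q.2.1 < r → SameBlock P q.2.1 r → q.2.2.2 ≤ r)).card

/-- The depth `d(i)`: the number of blocks containing `a`, `b` with `a < i < b`. -/
def depth {n : ℕ} (P : Finset (Finset (Fin n))) (i : Fin n) : ℕ :=
  (P.filter fun B => ∃ a ∈ B, ∃ b ∈ B, a < i ∧ i < b).card

/-- `sd(π)`: the sum of the depths of the singleton elements of `P`. -/
def sd {n : ℕ} (P : Finset (Finset (Fin n))) : ℕ :=
  ∑ i ∈ (univ : Finset (Fin n)).filter (fun i => {i} ∈ P), depth P i

/-- The `q`-integer `[m]_q = 1 + q + ⋯ + q^(m-1)`. -/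
def qInt (q : ℝ) (m : ℕ) : ℝ := ∑ j ∈ Finset.range m, q ^ j

/-- The `q`-factorial `[m]_q! = [1]_q [2]_q ⋯ [m]_q`. -/
def qFact (q : ℝ) (m : ℕ) : ℝ := ∏ j ∈ Finset.range m, qInt q (j + 1)

/-- The Hermite polynomials `H_m(x,t)`:
`x H_m = H_{m+1} + m t H_{m-1}`. -/
def hermiteP (x t : ℝ) : ℕ → ℝ
  | 0 => 1
  | 1 => x
  | m + 2 => x * hermiteP x t (m + 1) - ((m : ℝ) + 1) * t * hermiteP x t m

/-- The centered Charlier polynomials `C_m(x,t)`: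
`x C_m = C_{m+1} + m C_m + t m C_{m-1}`. -/
def charlierP (x t : ℝ) : ℕ → ℝ
  | 0 => 1
  | 1 => x
  | m + 2 => (x - ((m : ℝ) + 1)) * charlierP x t (m + 1)
      - t * ((m : ℝ) + 1) * charlierP x t m

/-- The (scaled) Chebyshev polynomials of the second kind `U_m(x,t)`:
`x U_m = U_{m+1} + t U_{m-1}`. -/
def chebyshevU (x t : ℝ) : ℕ → ℝ
  | 0 => 1
  | 1 => x
  | m + 2 => x * chebyshevU x t (m + 1) - t * chebyshevU x t m

/-- The centered free Charlier polynomials `C_{0,m}(x,t)`: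
`x C_{0,m} = C_{0,m+1} + C_{0,m} + t C_{0,m-1}` for `m ≥ 1`, `C_{0,1} = x`. -/
def freeCharlier (x t : ℝ) : ℕ → ℝ
  | 0 => 1
  | 1 => x
  | m + 2 => (x - 1) * freeCharlier x t (m + 1) - t * freeCharlier x t m

/-- The (scaled) continuous q-Hermite polynomials `H_{q,m}(x,t)`:
`x H_{q,m} = H_{q,m+1} + t [m]_q H_{q,m-1}`. -/
def qHermite (q x t : ℝ) : ℕ → ℝ
  | 0 => 1
  | 1 => x
  | m + 2 => x * qHermite q x t (m + 1) - t * qInt q (m + 1) * qHermite q x t m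

/-- The (scaled) centered continuous big q-Hermite polynomials `C_{q,m}(x,t)`:
`x C_{q,m} = C_{q,m+1} + [m]_q C_{q,m} + t [m]_q C_{q,m-1}`. -/
def bigQHermite (q x t : ℝ) : ℕ → ℝ
  | 0 => 1
  | 1 => x
  | m + 2 => (x - qInt q (m + 1)) * bigQHermite q x t (m + 1)
      - t * qInt q (m + 1) * bigQHermite q x t m

/-- The polynomials `P_{q,m,α}(x,t)`:
`x P_{q,m,α} = P_{q,m+1,α} + α [m]_q P_{q,m,α} + t [m]_q P_{q,m-1,α}`. -/
def qPPoly (q α x t : ℝ) : ℕ → ℝ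
  | 0 => 1
  | 1 => x
  | m + 2 => (x - α * qInt q (m + 1)) * qPPoly q α x t (m + 1)
      - t * qInt q (m + 1) * qPPoly q α x t m


namespace HermiteLinAux

/-! ### Basic lemmas about `hermiteP` and `blockIdx` -/

lemma hermite_succ (x t : ℝ) (m : ℕ) :
    hermiteP x t (m + 1) = x * hermiteP x t m - m * t * hermiteP x t (m - 1) := by
  cases m with
  | zero => simp [hermiteP]
  | succ k =>
    show hermiteP x t (k + 2) = _
    rw [hermiteP]
    push_cast
    ring_nf

lemma blockIdx_append (A : List ℕ) (a i : ℕ) :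
    blockIdx (A ++ [a]) i = blockIdx A i + if A.sum + a ≤ i then 1 else 0 := by
  unfold blockIdx
  rw [List.length_append, List.length_singleton, List.range_succ, List.countP_append]
  congr 1
  · apply List.countP_congr
    intro j hj
    rw [List.mem_range] at hj
    simp only [decide_eq_true_eq]
    rw [List.take_append_of_le_length (by omega)]
  · have h : (A ++ [a]).take (A.length + 1) = A ++ [a] := List.take_of_length_le (by simp)
    simp [List.countP_cons, h]

lemma blockIdx_ge (ns : List ℕ) (i : ℕ) (h : ns.sum ≤ i) : blockIdx ns i = ns.length := by
  unfold blockIdx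
  conv_rhs => rw [← List.length_range (n := ns.length)]
  apply List.countP_eq_length.2
  intro j hj
  simp only [decide_eq_true_eq]
  calc (ns.take (j+1)).sum ≤ ns.sum := by
        conv_rhs => rw [← List.take_append_drop (j+1) ns]
        rw [List.sum_append]; omega
    _ ≤ i := h

lemma blockIdx_le (ns : List ℕ) (i : ℕ) : blockIdx ns i ≤ ns.length := by
  unfold blockIdx
  exact le_trans List.countP_le_length (by simp)

lemma blockIdx_lt (ns : List ℕ) (i : ℕ) (h : i < ns.sum) : blockIdx ns i < ns.length := by
  rcases Nat.lt_or_ge (blockIdx ns i) ns.length with h1 | h1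
  · exact h1
  · exfalso
    have hlen : ns.length ≠ 0 := by
      intro h0
      rw [List.length_eq_zero_iff] at h0
      subst h0; simp at h
    have hall : ∀ j ∈ List.range ns.length, (fun j => decide ((ns.take (j + 1)).sum ≤ i)) j = true := by
      apply List.countP_eq_length.1
      have h2 := blockIdx_le ns i
      unfold blockIdx at h1 h2
      rw [List.length_range]
      omega
    have := hall (ns.length - 1) (by rw [List.mem_range]; omega)
    simp only [decide_eq_true_eq] at this
    rw [Nat.sub_add_cancel (by omega), List.take_length] at this
    omega


/-! ### Transport of partitions along injections -/

variable {a b n : ℕ}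

def upB (g : Fin a → Fin b) (B : Finset (Fin a)) : Finset (Fin b) := B.image g

def downB (g : Fin a → Fin b) (B : Finset (Fin b)) : Finset (Fin a) :=
  univ.filter (fun i => g i ∈ B)

def upP (g : Fin a → Fin b) (π : Finset (Finset (Fin a))) : Finset (Finset (Fin b)) :=
  π.image (upB g)

def resP (g : Fin a → Fin b) (P : Finset (Finset (Fin b))) : Finset (Finset (Fin a)) :=
  (P.image (downB g)).erase ∅

lemma mem_resP {g : Fin a → Fin b} {P : Finset (Finset (Fin b))} {C : Finset (Fin a)} :
    C ∈ resP g P ↔ C ≠ ∅ ∧ ∃ B ∈ P, downB g B = C := by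
  rw [resP, Finset.mem_erase, Finset.mem_image]

lemma mem_upB {g : Fin a → Fin b} {B : Finset (Fin a)} {j : Fin b} :
    j ∈ upB g B ↔ ∃ i ∈ B, g i = j := by simp [upB]

lemma mem_downB {g : Fin a → Fin b} {B : Finset (Fin b)} {i : Fin a} :
    i ∈ downB g B ↔ g i ∈ B := by simp [downB]

lemma downB_upB {g : Fin a → Fin b} (hg : Function.Injective g) (B : Finset (Fin a)) :
    downB g (upB g B) = B := by
  ext i; simp only [mem_downB, mem_upB]
  constructor
  · rintro ⟨i', hi', he⟩; rwa [← hg he]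
  · exact fun h => ⟨i, h, rfl⟩

lemma upB_downB {g : Fin a → Fin b} {B : Finset (Fin b)}
    (hB : ∀ j ∈ B, ∃ i, g i = j) : upB g (downB g B) = B := by
  ext j; simp only [mem_upB, mem_downB]
  constructor
  · rintro ⟨i, hi, rfl⟩; exact hi
  · intro hj; obtain ⟨i, rfl⟩ := hB j hj; exact ⟨i, hj, rfl⟩

lemma card_upB {g : Fin a → Fin b} (hg : Function.Injective g) (B : Finset (Fin a)) :
    (upB g B).card = B.card := Finset.card_image_of_injective _ hg

lemma upB_injective {g : Fin a → Fin b} (hg : Function.Injective g) :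
    Function.Injective (upB g) := by
  intro B C h
  have := congrArg (downB g) h
  rwa [downB_upB hg, downB_upB hg] at this

lemma upB_nonempty {g : Fin a → Fin b} {B : Finset (Fin a)} (h : B.Nonempty) :
    (upB g B).Nonempty := h.image g

lemma card_filter_upP {g : Fin a → Fin b} (hg : Function.Injective g)
    (π : Finset (Finset (Fin a))) (c : ℕ) :
    ((upP g π).filter (fun B => B.card = c)).card
      = (π.filter (fun B => B.card = c)).card := by
  unfold upP
  rw [Finset.filter_image]
  rw [Finset.card_image_of_injective _ (upB_injective hg)]
  congr 1
  apply Finset.filter_congr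
  intro B _
  simp [card_upB hg]

lemma scount_upP {g : Fin a → Fin b} (hg : Function.Injective g)
    (π : Finset (Finset (Fin a))) : scount (upP g π) = scount π :=
  card_filter_upP hg π 1

lemma s2count_upP {g : Fin a → Fin b} (hg : Function.Injective g)
    (π : Finset (Finset (Fin a))) : s2count (upP g π) = s2count π :=
  card_filter_upP hg π 2

lemma scount_insert_one {P : Finset (Finset (Fin n))} {D : Finset (Fin n)}
    (hD : D ∉ P) (h1 : D.card = 1) : scount (insert D P) = scount P + 1 := by
  unfold scount
  rw [Finset.filter_insert, if_pos h1]
  exact Finset.card_insert_of_notMem (fun h => hD (Finset.mem_of_mem_filter _ h))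

lemma scount_insert_two {P : Finset (Finset (Fin n))} {D : Finset (Fin n)}
    (h1 : D.card = 2) : scount (insert D P) = scount P := by
  unfold scount
  rw [Finset.filter_insert, if_neg (by omega)]

lemma s2count_insert_one {P : Finset (Finset (Fin n))} {D : Finset (Fin n)}
    (h1 : D.card = 1) : s2count (insert D P) = s2count P := by
  unfold s2count
  rw [Finset.filter_insert, if_neg (by omega)]

lemma s2count_insert_two {P : Finset (Finset (Fin n))} {D : Finset (Fin n)}
    (hD : D ∉ P) (h1 : D.card = 2) : s2count (insert D P) = s2count P + 1 := by
  unfold s2count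
  rw [Finset.filter_insert, if_pos h1]
  exact Finset.card_insert_of_notMem (fun h => hD (Finset.mem_of_mem_filter _ h))

lemma scount_erase_one {P : Finset (Finset (Fin n))} {D : Finset (Fin n)}
    (hD : D ∈ P) (h1 : D.card = 1) : scount (P.erase D) = scount P - 1 := by
  unfold scount
  rw [Finset.filter_erase, Finset.card_erase_of_mem (Finset.mem_filter.2 ⟨hD, h1⟩)]

lemma s2count_erase_one {P : Finset (Finset (Fin n))} {D : Finset (Fin n)}
    (h1 : D.card = 1) : s2count (P.erase D) = s2count P := by
  unfold s2count
  rw [Finset.filter_erase, Finset.erase_eq_of_notMem]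
  intro h
  have := (Finset.mem_filter.1 h).2
  omega

lemma singleton_count (π : Finset (Finset (Fin n))) :
    (univ.filter fun j : Fin n => ({j} : Finset (Fin n)) ∈ π).card = scount π := by
  unfold scount
  apply Finset.card_bij (fun j _ => ({j} : Finset (Fin n)))
  · intro j hj
    rw [Finset.mem_filter] at hj ⊢
    exact ⟨hj.2, Finset.card_singleton j⟩
  · intro j1 _ j2 _ h
    exact Finset.singleton_injective h
  · intro B hB
    rw [Finset.mem_filter] at hB
    obtain ⟨j, rfl⟩ := Finset.card_eq_one.1 hB.2
    exact ⟨j, by simp [hB.1], rfl⟩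

/-! ### The partition sum -/

def Qp (ns : List ℕ) (n : ℕ) : Finset (Finset (Finset (Fin n))) :=
  univ.filter (fun P => IsPartition P ∧ Inhom ns P ∧ ∀ B ∈ P, B.card ≤ 2)

lemma mem_Qp {ns : List ℕ} {P : Finset (Finset (Fin n))} :
    P ∈ Qp ns n ↔ IsPartition P ∧ Inhom ns P ∧ ∀ B ∈ P, B.card ≤ 2 := by
  simp [Qp]

def S (x t : ℝ) (ns : List ℕ) (n : ℕ) : ℝ :=
  ∑ P ∈ Qp ns n, t ^ s2count P * hermiteP x t (scount P)

lemma S_nil (x t : ℝ) (ns : List ℕ) : S x t ns 0 = 1 := by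
  have : Qp ns 0 = {∅} := by
    ext P
    rw [mem_Qp, Finset.mem_singleton]
    constructor
    · rintro ⟨⟨hne, _, _⟩, _, _⟩
      apply Finset.eq_empty_of_forall_notMem
      intro B hB
      obtain ⟨i, _⟩ := hne B hB
      exact i.elim0
    · rintro rfl
      refine ⟨⟨by simp, fun i => i.elim0, by simp⟩, by simp [Inhom], by simp⟩
  rw [S, this]
  simp [scount, s2count, hermiteP]


/-! ### Step A: appending an interval block of size 1 -/

section StepA

variable {n : ℕ} {ns : List ℕ}

lemma A_blockIdx_cast (hn : ns.sum = n) (i : Fin n) :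
    blockIdx (ns ++ [1]) ((Fin.castSucc i : Fin (n+1)) : ℕ) = blockIdx ns (i : ℕ) := by
  rw [Fin.coe_castSucc, blockIdx_append, if_neg (by have := i.isLt; omega)]
  omega

lemma A_blockIdx_last (hn : ns.sum = n) :
    blockIdx (ns ++ [1]) ((Fin.last n : Fin (n+1)) : ℕ) = ns.length := by
  rw [Fin.val_last, blockIdx_append, if_neg (by omega), blockIdx_ge ns n (by omega)]
  omega

lemma A_blockIdx_lt (hn : ns.sum = n) (i : Fin n) : blockIdx ns (i : ℕ) < ns.length :=
  blockIdx_lt ns i (by have := i.isLt; omega)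

lemma L_not_mem_upB {B : Finset (Fin n)} : Fin.last n ∉ upB Fin.castSucc B := by
  rw [mem_upB]
  rintro ⟨i, _, h⟩
  exact (Fin.castSucc_lt_last i).ne h

lemma L_not_mem_upP {π : Finset (Finset (Fin n))} {C : Finset (Fin (n+1))}
    (hC : C ∈ upP Fin.castSucc π) : Fin.last n ∉ C := by
  rw [upP, Finset.mem_image] at hC
  obtain ⟨B, _, rfl⟩ := hC
  exact L_not_mem_upB

lemma A_res_mem (hn : ns.sum = n) {P : Finset (Finset (Fin (n+1)))}
    (hP : P ∈ Qp (ns ++ [1]) (n+1)) : resP Fin.castSucc P ∈ Qp ns n := by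
  obtain ⟨⟨hne, hcov, hdis⟩, hI, h2⟩ := mem_Qp.1 hP
  rw [mem_Qp]
  refine ⟨⟨?_, ?_, ?_⟩, ?_, ?_⟩
  · intro C hC
    rw [resP, Finset.mem_erase] at hC
    exact Finset.nonempty_iff_ne_empty.2 hC.1
  · intro i
    obtain ⟨B, hB, hiB⟩ := hcov (Fin.castSucc i)
    refine ⟨downB Fin.castSucc B, ?_, mem_downB.2 hiB⟩
    rw [resP, Finset.mem_erase]
    constructor
    · intro h
      have : i ∈ downB Fin.castSucc B := mem_downB.2 hiB
      rw [h] at this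
      exact absurd this (Finset.notMem_empty i)
    · exact Finset.mem_image_of_mem _ hB
  · intro C hC D hD i hiC hiD
    rw [resP, Finset.mem_erase, Finset.mem_image] at hC hD
    obtain ⟨B, hB, rfl⟩ := hC.2
    obtain ⟨B', hB', rfl⟩ := hD.2
    rw [mem_downB] at hiC hiD
    rw [hdis B hB B' hB' _ hiC hiD]
  · intro C hC i hiC j hjC hij
    rw [resP, Finset.mem_erase, Finset.mem_image] at hC
    obtain ⟨B, hB, rfl⟩ := hC.2
    rw [mem_downB] at hiC hjC
    have := hI B hB _ hiC _ hjC (fun h => hij (Fin.castSucc_injective n h))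
    rwa [A_blockIdx_cast hn, A_blockIdx_cast hn] at this
  · intro C hC
    rw [resP, Finset.mem_erase, Finset.mem_image] at hC
    obtain ⟨B, hB, rfl⟩ := hC.2
    calc (downB Fin.castSucc B).card ≤ B.card :=
          Finset.card_le_card_of_injOn Fin.castSucc (fun i hi => mem_downB.1 hi)
            (fun i _ j _ h => Fin.castSucc_injective n h)
      _ ≤ 2 := h2 B hB

lemma A_up_none_mem (hn : ns.sum = n) {π : Finset (Finset (Fin n))}
    (hπ : π ∈ Qp ns n) :
    insert {Fin.last n} (upP Fin.castSucc π) ∈ Qp (ns ++ [1]) (n+1) := by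
  obtain ⟨⟨hne, hcov, hdis⟩, hI, h2⟩ := mem_Qp.1 hπ
  rw [mem_Qp]
  refine ⟨⟨?_, ?_, ?_⟩, ?_, ?_⟩
  · intro B hB
    rcases Finset.mem_insert.1 hB with rfl | hB
    · exact ⟨_, Finset.mem_singleton_self _⟩
    · rw [upP, Finset.mem_image] at hB
      obtain ⟨C, hC, rfl⟩ := hB
      exact upB_nonempty (hne C hC)
  · intro y
    by_cases hy : y = Fin.last n
    · exact ⟨{Fin.last n}, Finset.mem_insert_self _ _, by simp [hy]⟩
    · obtain ⟨i, rfl⟩ := Fin.exists_castSucc_eq.2 hy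
      obtain ⟨B, hB, hiB⟩ := hcov i
      exact ⟨upB Fin.castSucc B,
        Finset.mem_insert_of_mem (Finset.mem_image_of_mem _ hB),
        mem_upB.2 ⟨i, hiB, rfl⟩⟩
  · intro B hB C hC y hyB hyC
    rcases Finset.mem_insert.1 hB with rfl | hB <;>
      rcases Finset.mem_insert.1 hC with rfl | hC
    · rfl
    · rw [Finset.mem_singleton] at hyB
      subst hyB
      exact absurd hyC (L_not_mem_upP hC)
    · rw [Finset.mem_singleton] at hyC
      subst hyC
      exact absurd hyB (L_not_mem_upP hB)
    · rw [upP, Finset.mem_image] at hB hC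
      obtain ⟨B', hB', rfl⟩ := hB
      obtain ⟨C', hC', rfl⟩ := hC
      obtain ⟨i, hiB, rfl⟩ := mem_upB.1 hyB
      obtain ⟨i', hiC, he⟩ := mem_upB.1 hyC
      have hiC' : i ∈ C' := by rwa [show i' = i from Fin.castSucc_injective n he] at hiC
      rw [hdis B' hB' C' hC' i hiB hiC']
  · intro B hB i hiB j hjB hij
    rcases Finset.mem_insert.1 hB with rfl | hB
    · rw [Finset.mem_singleton] at hiB hjB
      exact absurd (hiB.trans hjB.symm) hij
    · rw [upP, Finset.mem_image] at hB
      obtain ⟨C, hC, rfl⟩ := hB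
      obtain ⟨i', hi', rfl⟩ := mem_upB.1 hiB
      obtain ⟨j', hj', rfl⟩ := mem_upB.1 hjB
      rw [A_blockIdx_cast hn, A_blockIdx_cast hn]
      exact hI C hC _ hi' _ hj' (fun h => hij (by rw [h]))
  · intro B hB
    rcases Finset.mem_insert.1 hB with rfl | hB
    · simp
    · rw [upP, Finset.mem_image] at hB
      obtain ⟨C, hC, rfl⟩ := hB
      rw [card_upB (Fin.castSucc_injective n)]
      exact h2 C hC

lemma A_pair_not_mem_upP {π : Finset (Finset (Fin n))} {j : Fin n} :
    ({Fin.castSucc j, Fin.last n} : Finset (Fin (n+1))) ∉ upP Fin.castSucc π := by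
  intro h
  exact L_not_mem_upP h (by simp)

lemma A_pair_card {j : Fin n} :
    ({Fin.castSucc j, Fin.last n} : Finset (Fin (n+1))).card = 2 :=
  Finset.card_pair (Fin.castSucc_lt_last j).ne

lemma A_up_some_mem (hn : ns.sum = n) {π : Finset (Finset (Fin n))}
    (hπ : π ∈ Qp ns n) {j : Fin n} (hj : ({j} : Finset (Fin n)) ∈ π) :
    insert {Fin.castSucc j, Fin.last n}
      ((upP Fin.castSucc π).erase {Fin.castSucc j}) ∈ Qp (ns ++ [1]) (n+1) := by
  obtain ⟨⟨hne, hcov, hdis⟩, hI, h2⟩ := mem_Qp.1 hπ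
  have hjπ : ({Fin.castSucc j} : Finset (Fin (n+1))) = upB Fin.castSucc {j} := by
    simp [upB]
  rw [mem_Qp]
  refine ⟨⟨?_, ?_, ?_⟩, ?_, ?_⟩
  · intro B hB
    rcases Finset.mem_insert.1 hB with rfl | hB
    · exact ⟨_, Finset.mem_insert_self _ _⟩
    · rw [Finset.mem_erase, upP, Finset.mem_image] at hB
      obtain ⟨C, hC, rfl⟩ := hB.2
      exact upB_nonempty (hne C hC)
  · intro y
    by_cases hy : y = Fin.last n
    · exact ⟨_, Finset.mem_insert_self _ _, by simp [hy]⟩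
    · obtain ⟨i, rfl⟩ := Fin.exists_castSucc_eq.2 hy
      obtain ⟨B, hB, hiB⟩ := hcov i
      by_cases hBj : B = {j}
      · subst hBj
        rw [Finset.mem_singleton] at hiB
        subst hiB
        exact ⟨_, Finset.mem_insert_self _ _, by simp⟩
      · refine ⟨upB Fin.castSucc B, Finset.mem_insert_of_mem ?_, mem_upB.2 ⟨i, hiB, rfl⟩⟩
        rw [Finset.mem_erase]
        refine ⟨?_, Finset.mem_image_of_mem _ hB⟩
        rw [hjπ]
        exact fun h => hBj (upB_injective (Fin.castSucc_injective n) h)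
  · intro B hB C hC y hyB hyC
    have key : ∀ D ∈ (upP Fin.castSucc π).erase {Fin.castSucc j},
        ∀ z ∈ D, z ∈ ({Fin.castSucc j, Fin.last n} : Finset (Fin (n+1))) → False := by
      intro D hD z hzD hzP
      rw [Finset.mem_erase, upP, Finset.mem_image] at hD
      obtain ⟨hDne, C', hC', rfl⟩ := hD
      obtain ⟨a, haC, rfl⟩ := mem_upB.1 hzD
      rcases Finset.mem_insert.1 hzP with h | h
      · have haj : a = j := Fin.castSucc_injective n h
        subst haj
        have hCj : C' = {a} := hdis C' hC' {a} hj a haC (Finset.mem_singleton_self a)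
        apply hDne
        rw [hCj]
        exact hjπ.symm
      · rw [Finset.mem_singleton] at h
        exact (Fin.castSucc_lt_last a).ne h
    rcases Finset.mem_insert.1 hB with rfl | hB <;>
      rcases Finset.mem_insert.1 hC with rfl | hC
    · rfl
    · exact absurd (key C hC y hyC hyB) (fun h => h)
    · exact absurd (key B hB y hyB hyC) (fun h => h)
    · have hB' := hB
      have hC' := hC
      rw [Finset.mem_erase, upP, Finset.mem_image] at hB' hC'
      obtain ⟨B', hB'', rfl⟩ := hB'.2
      obtain ⟨C', hC'', rfl⟩ := hC'.2
      obtain ⟨i, hiB, rfl⟩ := mem_upB.1 hyB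
      obtain ⟨i', hiC, he⟩ := mem_upB.1 hyC
      have hiC' : i ∈ C' := by rwa [show i' = i from Fin.castSucc_injective n he] at hiC
      rw [hdis B' hB'' C' hC'' i hiB hiC']
  · intro B hB i hiB j' hjB hij
    rcases Finset.mem_insert.1 hB with rfl | hB
    · simp only [Finset.mem_insert, Finset.mem_singleton] at hiB hjB
      rcases hiB with rfl | rfl <;> rcases hjB with rfl | rfl
      · exact absurd rfl hij
      · rw [A_blockIdx_cast hn, A_blockIdx_last hn]
        exact (A_blockIdx_lt hn j).ne
      · rw [A_blockIdx_last hn, A_blockIdx_cast hn]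
        exact (A_blockIdx_lt hn j).ne'
      · exact absurd rfl hij
    · rw [Finset.mem_erase, upP, Finset.mem_image] at hB
      obtain ⟨C, hC, rfl⟩ := hB.2
      obtain ⟨a, ha, rfl⟩ := mem_upB.1 hiB
      obtain ⟨b, hb, rfl⟩ := mem_upB.1 hjB
      rw [A_blockIdx_cast hn, A_blockIdx_cast hn]
      exact hI C hC _ ha _ hb (fun h => hij (by rw [h]))
  · intro B hB
    rcases Finset.mem_insert.1 hB with rfl | hB
    · rw [A_pair_card]
    · rw [Finset.mem_erase, upP, Finset.mem_image] at hB
      obtain ⟨C, hC, rfl⟩ := hB.2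
      rw [card_upB (Fin.castSucc_injective n)]
      exact h2 C hC


lemma A_downB_L : downB Fin.castSucc ({Fin.last n} : Finset (Fin (n+1))) = ∅ := by
  ext i
  simp only [mem_downB, Finset.mem_singleton, Finset.notMem_empty, iff_false]
  exact (Fin.castSucc_lt_last i).ne

lemma A_downB_pair {j : Fin n} :
    downB Fin.castSucc ({Fin.castSucc j, Fin.last n} : Finset (Fin (n+1))) = {j} := by
  ext i
  rw [mem_downB]
  simp only [Finset.mem_insert, Finset.mem_singleton]
  constructor
  · rintro (h | h)
    · exact Fin.castSucc_injective n h
    · exact absurd h (Fin.castSucc_lt_last i).ne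
  · rintro rfl
    left
    rfl

lemma A_upB_singleton {j : Fin n} :
    upB Fin.castSucc ({j} : Finset (Fin n)) = {Fin.castSucc j} := by simp [upB]

def candsA {n : ℕ} (P : Finset (Finset (Fin (n+1)))) : Finset (Fin n) :=
  univ.filter (fun j => SameBlock P (Fin.castSucc j) (Fin.last n))

lemma A_dichotomy {P : Finset (Finset (Fin (n+1)))} (hP : P ∈ Qp (ns ++ [1]) (n+1)) :
    (({Fin.last n} : Finset (Fin (n+1))) ∈ P ∧ candsA P = ∅) ∨
      ∃ j : Fin n, ({Fin.castSucc j, Fin.last n} : Finset (Fin (n+1))) ∈ P ∧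
        candsA P = {j} := by
  obtain ⟨⟨hne, hcov, hdis⟩, hI, h2⟩ := mem_Qp.1 hP
  obtain ⟨B, hB, hLB⟩ := hcov (Fin.last n)
  have hcard : B.card = 1 ∨ B.card = 2 := by
    have h1 := h2 B hB
    have h0 := Finset.card_pos.2 (hne B hB)
    omega
  rcases hcard with h1 | h1
  · obtain ⟨c, rfl⟩ := Finset.card_eq_one.1 h1
    rw [Finset.mem_singleton] at hLB
    subst hLB
    left
    refine ⟨hB, ?_⟩
    ext j
    simp only [candsA, Finset.mem_filter, Finset.mem_univ, true_and,
      Finset.notMem_empty, iff_false]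
    rintro ⟨C, hC, hjC, hLC⟩
    have hCB : C = {Fin.last n} := hdis C hC _ hB (Fin.last n) hLC (Finset.mem_singleton_self _)
    rw [hCB, Finset.mem_singleton] at hjC
    exact (Fin.castSucc_lt_last j).ne hjC
  · obtain ⟨c, d, hcd, rfl⟩ := Finset.card_eq_two.1 h1
    rw [Finset.mem_insert, Finset.mem_singleton] at hLB
    have hBe : ∃ e : Fin n, ({c, d} : Finset (Fin (n+1))) = {Fin.castSucc e, Fin.last n} := by
      rcases hLB with rfl | rfl
      · obtain ⟨e, rfl⟩ := Fin.exists_castSucc_eq.2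
          (show d ≠ Fin.last n from fun h => hcd h.symm)
        exact ⟨e, Finset.pair_comm _ _⟩
      · obtain ⟨e, rfl⟩ := Fin.exists_castSucc_eq.2
          (show c ≠ Fin.last n from hcd)
        exact ⟨e, rfl⟩
    obtain ⟨e, hBe⟩ := hBe
    rw [hBe] at hB
    right
    refine ⟨e, hB, ?_⟩
    ext j
    simp only [candsA, Finset.mem_filter, Finset.mem_univ, true_and, Finset.mem_singleton]
    constructor
    · rintro ⟨C, hC, hjC, hLC⟩
      have hCB : C = {Fin.castSucc e, Fin.last n} := hdis C hC _ hB _ hLC (by simp)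
      rw [hCB, Finset.mem_insert, Finset.mem_singleton] at hjC
      rcases hjC with h | h
      · exact Fin.castSucc_injective n h
      · exact absurd h (Fin.castSucc_lt_last j).ne
    · rintro rfl
      exact ⟨_, hB, by simp, by simp⟩

lemma A_recon_none {P : Finset (Finset (Fin (n+1)))} (hP : P ∈ Qp (ns ++ [1]) (n+1))
    (hL : ({Fin.last n} : Finset (Fin (n+1))) ∈ P) :
    insert {Fin.last n} (upP Fin.castSucc (resP Fin.castSucc P)) = P := by
  obtain ⟨⟨hne, hcov, hdis⟩, hI, h2⟩ := mem_Qp.1 hP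
  have hup : upP Fin.castSucc (resP Fin.castSucc P) = P.erase {Fin.last n} := by
    ext C
    rw [upP, Finset.mem_image, Finset.mem_erase]
    constructor
    · rintro ⟨C', hC', rfl⟩
      rw [mem_resP] at hC'
      obtain ⟨hC'ne, B, hB, rfl⟩ := hC'
      have hBL : B ≠ {Fin.last n} := by
        rintro rfl
        exact hC'ne A_downB_L
      have hLB : Fin.last n ∉ B :=
        fun h => hBL (hdis B hB _ hL _ h (Finset.mem_singleton_self _))
      have hu : upB Fin.castSucc (downB Fin.castSucc B) = B :=
        upB_downB (fun y hy => Fin.exists_castSucc_eq.2 (fun h => hLB (h ▸ hy)))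
      rw [hu]
      exact ⟨hBL, hB⟩
    · rintro ⟨hCL, hC⟩
      have hLC : Fin.last n ∉ C :=
        fun h => hCL (hdis C hC _ hL _ h (Finset.mem_singleton_self _))
      have hu : upB Fin.castSucc (downB Fin.castSucc C) = C :=
        upB_downB (fun y hy => Fin.exists_castSucc_eq.2 (fun h => hLC (h ▸ hy)))
      refine ⟨downB Fin.castSucc C, ?_, hu⟩
      rw [mem_resP]
      refine ⟨?_, C, hC, rfl⟩
      obtain ⟨y, hy⟩ := hne C hC
      obtain ⟨i, rfl⟩ := Fin.exists_castSucc_eq.2 (fun h => hLC (h ▸ hy))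
      exact Finset.ne_empty_of_mem (mem_downB.2 hy)
  rw [hup, Finset.insert_erase hL]

lemma A_recon_some {P : Finset (Finset (Fin (n+1)))} (hP : P ∈ Qp (ns ++ [1]) (n+1))
    {j : Fin n} (hj : ({Fin.castSucc j, Fin.last n} : Finset (Fin (n+1))) ∈ P) :
    insert {Fin.castSucc j, Fin.last n}
      ((upP Fin.castSucc (resP Fin.castSucc P)).erase {Fin.castSucc j}) = P := by
  obtain ⟨⟨hne, hcov, hdis⟩, hI, h2⟩ := mem_Qp.1 hP
  have hup : upP Fin.castSucc (resP Fin.castSucc P)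
      = insert {Fin.castSucc j} (P.erase {Fin.castSucc j, Fin.last n}) := by
    ext C
    rw [upP, Finset.mem_image, Finset.mem_insert, Finset.mem_erase]
    constructor
    · rintro ⟨C', hC', rfl⟩
      rw [mem_resP] at hC'
      obtain ⟨hC'ne, B, hB, rfl⟩ := hC'
      by_cases hBD : B = {Fin.castSucc j, Fin.last n}
      · subst hBD
        left
        rw [A_downB_pair, A_upB_singleton]
      · right
        have hLB : Fin.last n ∉ B := fun h => hBD (hdis B hB _ hj _ h (by simp))
        have hu : upB Fin.castSucc (downB Fin.castSucc B) = B :=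
          upB_downB (fun y hy => Fin.exists_castSucc_eq.2 (fun h => hLB (h ▸ hy)))
        rw [hu]
        exact ⟨hBD, hB⟩
    · rintro (rfl | ⟨hCD, hC⟩)
      · refine ⟨{j}, ?_, A_upB_singleton⟩
        rw [mem_resP]
        exact ⟨by simp, _, hj, A_downB_pair⟩
      · have hLC : Fin.last n ∉ C := fun h => hCD (hdis C hC _ hj _ h (by simp))
        have hu : upB Fin.castSucc (downB Fin.castSucc C) = C :=
          upB_downB (fun y hy => Fin.exists_castSucc_eq.2 (fun h => hLC (h ▸ hy)))
        refine ⟨downB Fin.castSucc C, ?_, hu⟩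
        rw [mem_resP]
        refine ⟨?_, C, hC, rfl⟩
        obtain ⟨y, hy⟩ := hne C hC
        obtain ⟨i, rfl⟩ := Fin.exists_castSucc_eq.2 (fun h => hLC (h ▸ hy))
        exact Finset.ne_empty_of_mem (mem_downB.2 hy)
  have hjn : ({Fin.castSucc j} : Finset (Fin (n+1))) ∉ P.erase {Fin.castSucc j, Fin.last n} := by
    rw [Finset.mem_erase]
    rintro ⟨hne', hmem⟩
    have heq : ({Fin.castSucc j} : Finset (Fin (n+1))) = {Fin.castSucc j, Fin.last n} :=
      hdis _ hmem _ hj (Fin.castSucc j) (Finset.mem_singleton_self _) (by simp)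
    have := congrArg Finset.card heq
    rw [Finset.card_singleton, A_pair_card] at this
    omega
  rw [hup, Finset.erase_insert hjn, Finset.insert_erase hj]

lemma A_upP_erase {π : Finset (Finset (Fin n))} {j : Fin n} :
    (upP Fin.castSucc π).erase {Fin.castSucc j} = upP Fin.castSucc (π.erase {j}) := by
  rw [upP, upP, ← A_upB_singleton,
    ← Finset.image_erase (upB_injective (Fin.castSucc_injective n))]

lemma A_resP_upP {π : Finset (Finset (Fin n))} (hne : ∀ B ∈ π, B.Nonempty) :
    resP Fin.castSucc (upP Fin.castSucc π) = π := by
  rw [resP, upP, Finset.image_image]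
  have h1 : π.image (downB Fin.castSucc ∘ upB Fin.castSucc) = π := by
    rw [Finset.image_congr (g := id), Finset.image_id]
    intro B _
    exact downB_upB (Fin.castSucc_injective n) B
  rw [h1]
  apply Finset.erase_eq_of_notMem
  intro h
  obtain ⟨y, hy⟩ := hne ∅ h
  exact Finset.notMem_empty y hy

lemma A_inv_none {π : Finset (Finset (Fin n))} (hπ : π ∈ Qp ns n) :
    resP Fin.castSucc (insert {Fin.last n} (upP Fin.castSucc π)) = π ∧
    candsA (insert {Fin.last n} (upP Fin.castSucc π)) = ∅ := by
  obtain ⟨⟨hne, hcov, hdis⟩, hI, h2⟩ := mem_Qp.1 hπ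
  constructor
  · rw [resP, Finset.image_insert, A_downB_L]
    rw [show ((insert ∅ ((upP Fin.castSucc π).image (downB Fin.castSucc))).erase ∅ : Finset (Finset (Fin n)))
      = ((upP Fin.castSucc π).image (downB Fin.castSucc)).erase ∅ from Finset.erase_insert_eq_erase _ _]
    rw [← resP]
    exact A_resP_upP hne
  · ext j
    simp only [candsA, Finset.mem_filter, Finset.mem_univ, true_and,
      Finset.notMem_empty, iff_false]
    rintro ⟨C, hC, hjC, hLC⟩
    rcases Finset.mem_insert.1 hC with rfl | hC
    · rw [Finset.mem_singleton] at hjC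
      exact (Fin.castSucc_lt_last j).ne hjC
    · exact L_not_mem_upP hC hLC

lemma A_inv_some {π : Finset (Finset (Fin n))} (hπ : π ∈ Qp ns n)
    {j : Fin n} (hj : ({j} : Finset (Fin n)) ∈ π) :
    resP Fin.castSucc (insert {Fin.castSucc j, Fin.last n}
        ((upP Fin.castSucc π).erase {Fin.castSucc j})) = π ∧
    candsA (insert {Fin.castSucc j, Fin.last n}
        ((upP Fin.castSucc π).erase {Fin.castSucc j})) = {j} := by
  obtain ⟨⟨hne, hcov, hdis⟩, hI, h2⟩ := mem_Qp.1 hπ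
  have hne' : ∀ B ∈ π.erase {j}, B.Nonempty := fun B hB => hne B (Finset.mem_of_mem_erase hB)
  constructor
  · rw [A_upP_erase, resP, Finset.image_insert, A_downB_pair]
    rw [show ((insert {j} ((upP Fin.castSucc (π.erase {j})).image (downB Fin.castSucc))).erase ∅ : Finset (Finset (Fin n)))
      = insert {j} (((upP Fin.castSucc (π.erase {j})).image (downB Fin.castSucc)).erase ∅) from ?_]
    · rw [← resP, A_resP_upP hne', Finset.insert_erase hj]
    · rw [Finset.erase_insert_of_ne (by simp)]
  · ext j'
    simp only [candsA, Finset.mem_filter, Finset.mem_univ, true_and, Finset.mem_singleton]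
    constructor
    · rintro ⟨C, hC, hjC, hLC⟩
      rcases Finset.mem_insert.1 hC with rfl | hC
      · rw [Finset.mem_insert, Finset.mem_singleton] at hjC
        rcases hjC with h | h
        · exact Fin.castSucc_injective n h
        · exact absurd h (Fin.castSucc_lt_last j').ne
      · exact absurd hLC (L_not_mem_upP (Finset.mem_of_mem_erase hC))
    · rintro rfl
      exact ⟨_, Finset.mem_insert_self _ _, by simp, by simp⟩

lemma A_count_none {π : Finset (Finset (Fin n))} :
    s2count (insert {Fin.last n} (upP Fin.castSucc π)) = s2count π ∧
    scount (insert {Fin.last n} (upP Fin.castSucc π)) = scount π + 1 := by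
  have hLn : ({Fin.last n} : Finset (Fin (n+1))) ∉ upP Fin.castSucc π :=
    fun h => L_not_mem_upP h (Finset.mem_singleton_self _)
  constructor
  · rw [s2count_insert_one (Finset.card_singleton _), s2count_upP (Fin.castSucc_injective n)]
  · rw [scount_insert_one hLn (Finset.card_singleton _), scount_upP (Fin.castSucc_injective n)]

lemma A_count_some {π : Finset (Finset (Fin n))} {j : Fin n}
    (hj : ({j} : Finset (Fin n)) ∈ π) :
    s2count (insert {Fin.castSucc j, Fin.last n}
        ((upP Fin.castSucc π).erase {Fin.castSucc j})) = s2count π + 1 ∧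
    scount (insert {Fin.castSucc j, Fin.last n}
        ((upP Fin.castSucc π).erase {Fin.castSucc j})) = scount π - 1 := by
  rw [A_upP_erase]
  have hD : ({Fin.castSucc j, Fin.last n} : Finset (Fin (n+1))) ∉
      upP Fin.castSucc (π.erase {j}) := A_pair_not_mem_upP
  constructor
  · rw [s2count_insert_two hD A_pair_card, s2count_upP (Fin.castSucc_injective n),
      s2count_erase_one (Finset.card_singleton _)]
  · rw [scount_insert_two A_pair_card, scount_upP (Fin.castSucc_injective n),
      scount_erase_one hj (Finset.card_singleton _)]

lemma stepA (x t : ℝ) (hn : ns.sum = n) :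
    S x t (ns ++ [1]) (n + 1) = x * S x t ns n := by
  classical
  have key : S x t (ns ++ [1]) (n+1) =
      ∑ q ∈ (Qp ns n).sigma (fun π => insert (none : Option (Fin n))
          ((univ.filter fun j : Fin n => ({j} : Finset (Fin n)) ∈ π).image some)),
        Option.elim q.2 (t ^ s2count q.1 * hermiteP x t (scount q.1 + 1))
          (fun _ => t ^ (s2count q.1 + 1) * hermiteP x t (scount q.1 - 1)) := by
    rw [S]
    apply Finset.sum_nbij'
      (i := fun P => (⟨resP Fin.castSucc P,
        if h : (candsA P).Nonempty then some ((candsA P).min' h) else none⟩ :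
          (_ : Finset (Finset (Fin n))) × Option (Fin n)))
      (j := fun q => Option.elim q.2 (insert {Fin.last n} (upP Fin.castSucc q.1))
        (fun j => insert {Fin.castSucc j, Fin.last n}
          ((upP Fin.castSucc q.1).erase {Fin.castSucc j})))
    · -- hi
      intro P hP
      rw [Finset.mem_sigma]
      refine ⟨A_res_mem hn hP, ?_⟩
      rcases A_dichotomy hP with ⟨hL, hc⟩ | ⟨j, hjP, hc⟩
      · rw [hc]
        simp
      · rw [hc, dif_pos (Finset.singleton_nonempty j), Finset.min'_singleton]
        rw [Finset.mem_insert]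
        right
        rw [Finset.mem_image]
        refine ⟨j, ?_, rfl⟩
        rw [Finset.mem_filter]
        refine ⟨Finset.mem_univ _, ?_⟩
        rw [mem_resP]
        exact ⟨by simp, _, hjP, A_downB_pair⟩
    · -- hj
      rintro ⟨π, c⟩ hq
      rw [Finset.mem_sigma] at hq
      obtain ⟨hπ, hc⟩ := hq
      rcases c with _ | j
      · exact A_up_none_mem hn hπ
      · rw [Finset.mem_insert] at hc
        rcases hc with h | h
        · exact absurd h (by simp)
        · rw [Finset.mem_image] at h
          obtain ⟨j', hj', he⟩ := h
          rw [Option.some_inj] at he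
          subst he
          rw [Finset.mem_filter] at hj'
          exact A_up_some_mem hn hπ hj'.2
    · -- left_inv
      intro P hP
      rcases A_dichotomy hP with ⟨hL, hc⟩ | ⟨j, hjP, hc⟩
      · rw [hc, dif_neg (by simp)]
        exact A_recon_none hP hL
      · rw [hc, dif_pos (Finset.singleton_nonempty j), Finset.min'_singleton]
        exact A_recon_some hP hjP
    · -- right_inv
      rintro ⟨π, c⟩ hq
      rw [Finset.mem_sigma] at hq
      obtain ⟨hπ, hc⟩ := hq
      rcases c with _ | j
      · dsimp only [Option.elim]
        obtain ⟨h1, h2⟩ := A_inv_none hπ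
        refine Sigma.ext h1 (heq_of_eq ?_)
        simp [h2]
      · rw [Finset.mem_insert] at hc
        rcases hc with h | h
        · exact absurd h (by simp)
        · rw [Finset.mem_image] at h
          obtain ⟨j', hj', he⟩ := h
          rw [Option.some_inj] at he
          subst he
          rw [Finset.mem_filter] at hj'
          obtain ⟨h1, h2⟩ := A_inv_some hπ hj'.2
          dsimp only [Option.elim]
          refine Sigma.ext h1 (heq_of_eq ?_)
          simp [h2]
    · -- values
      intro P hP
      rcases A_dichotomy hP with ⟨hL, hc⟩ | ⟨j, hjP, hc⟩
      · rw [hc, dif_neg (by simp)]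
        obtain ⟨h1, h2⟩ := (A_count_none (π := resP Fin.castSucc P))
        conv_lhs => rw [← A_recon_none hP hL]
        rw [h1, h2]
        rfl
      · rw [hc, dif_pos (Finset.singleton_nonempty j), Finset.min'_singleton]
        have hjres : ({j} : Finset (Fin n)) ∈ resP Fin.castSucc P := by
          rw [mem_resP]
          exact ⟨by simp, _, hjP, A_downB_pair⟩
        obtain ⟨h1, h2⟩ := A_count_some (π := resP Fin.castSucc P) hjres
        conv_lhs => rw [← A_recon_some hP hjP]
        rw [h1, h2]
        rfl
  rw [key, Finset.sum_sigma, S, Finset.mul_sum]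
  apply Finset.sum_congr rfl
  intro π hπ
  rw [Finset.sum_insert (by simp)]
  rw [Finset.sum_image (fun a _ b _ h => Option.some_injective _ h)]
  simp only [Option.elim]
  rw [Finset.sum_const, singleton_count, nsmul_eq_mul]
  rw [hermite_succ x t (scount π)]
  push_cast
  ring

end StepA


/-! ### Step B: splitting off the last element of the last interval block -/

section StepB

def eB {N : ℕ} (p : Fin (N + 2)) (i : Fin N) : Fin (N + 2) :=
  if (i : ℕ) < (p : ℕ) then ⟨i, by omega⟩ else ⟨(i : ℕ) + 1, by have := i.isLt; omega⟩

lemma eB_val {N : ℕ} (p : Fin (N + 2)) (i : Fin N) :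
    ((eB p i : Fin (N + 2)) : ℕ) = if (i : ℕ) < (p : ℕ) then (i : ℕ) else (i : ℕ) + 1 := by
  rw [eB]
  split <;> rfl

lemma eB_injective {N : ℕ} (p : Fin (N + 2)) : Function.Injective (eB p) := by
  intro i j h
  have h2 := congrArg Fin.val h
  rw [eB_val, eB_val] at h2
  apply Fin.ext
  split at h2 <;> split at h2 <;> omega

lemma eB_ne_p {N : ℕ} (p : Fin (N + 2)) (i : Fin N) : eB p i ≠ p := by
  intro h
  have h2 := congrArg Fin.val h
  rw [eB_val] at h2
  split at h2 <;> omega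

lemma eB_ne_last {N : ℕ} (p : Fin (N + 2)) (i : Fin N) : eB p i ≠ Fin.last (N + 1) := by
  intro h
  have h2 := congrArg Fin.val h
  rw [eB_val, Fin.val_last] at h2
  have := i.isLt
  split at h2 <;> omega

lemma eB_surj {N : ℕ} (p : Fin (N + 2)) (hp : (p : ℕ) < N + 1) (y : Fin (N + 2)) (hyp : y ≠ p)
    (hyL : y ≠ Fin.last (N + 1)) : ∃ i, eB p i = y := by
  have hy1 : (y : ℕ) ≠ (p : ℕ) := fun h => hyp (Fin.ext h)
  have hy2 : (y : ℕ) ≠ N + 1 := by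
    intro h
    exact hyL (Fin.ext (by simp [h]))
  have hy3 := y.isLt
  rcases Nat.lt_or_ge (y : ℕ) (p : ℕ) with h | h
  · have hp := p.isLt
    refine ⟨⟨(y : ℕ), by omega⟩, Fin.ext ?_⟩
    rw [eB_val]
    simp only
    rw [if_pos (by simpa using h)]
  · refine ⟨⟨(y : ℕ) - 1, by omega⟩, Fin.ext ?_⟩
    rw [eB_val]
    simp only
    rw [if_neg (by omega)]
    omega

variable {A : List ℕ} {k : ℕ}

lemma B_blockIdx_e {p : Fin (A.sum + k + 2)} (hp1 : A.sum ≤ (p : ℕ)) (i : Fin (A.sum + k)) :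
    blockIdx A ((eB p i : Fin (A.sum + k + 2)) : ℕ) = blockIdx A (i : ℕ) := by
  rw [eB_val]
  split
  · rfl
  · rw [blockIdx_ge A _ (by omega), blockIdx_ge A _ (by omega)]

lemma B_bm (i : ℕ) (hi : i < A.sum + k + 2) :
    blockIdx (A ++ [k + 2]) i = blockIdx A i := by
  rw [blockIdx_append, if_neg (by omega)]
  omega

lemma B_bs (i : ℕ) (hi : i < A.sum + k + 2) :
    blockIdx ((A ++ [k + 1]) ++ [1]) i
      = blockIdx A i + if i = A.sum + k + 1 then 1 else 0 := by
  have hs : (A ++ [k + 1]).sum = A.sum + (k + 1) := by simp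
  rw [blockIdx_append, hs, if_neg (by omega), blockIdx_append]
  have hiff : (A.sum + (k + 1) ≤ i) ↔ (i = A.sum + k + 1) := by omega
  rw [if_congr hiff rfl rfl]
  omega

lemma B_br (i : Fin (A.sum + k)) :
    blockIdx (A ++ [k]) (i : ℕ) = blockIdx A (i : ℕ) := by
  rw [blockIdx_append, if_neg (by have := i.isLt; omega)]
  omega

/-- The "good" predicate: the block of the last point contains no other element
of the last merged interval block. -/
def Bgood (P : Finset (Finset (Fin (A.sum + k + 2)))) : Prop :=
  ∀ B ∈ P, ¬(Fin.last (A.sum + k + 1) ∈ B ∧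
    ∃ p ∈ B, p ≠ Fin.last (A.sum + k + 1) ∧ A.sum ≤ (p : ℕ))

lemma B_Qp_eq :
    Qp (A ++ [k + 2]) (A.sum + k + 2)
      = (Qp ((A ++ [k + 1]) ++ [1]) (A.sum + k + 2)).filter Bgood := by
  ext P
  rw [Finset.mem_filter, mem_Qp, mem_Qp]
  constructor
  · rintro ⟨hpart, hI, h2⟩
    refine ⟨⟨hpart, ?_, h2⟩, ?_⟩
    · intro B hB i hi j hj hij
      have hIm := hI B hB i hi j hj hij
      rw [B_bm _ i.isLt, B_bm _ j.isLt] at hIm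
      rw [B_bs _ i.isLt, B_bs _ j.isLt]
      have hl1 := blockIdx_le A (i : ℕ)
      have hl2 := blockIdx_le A (j : ℕ)
      have hg1 : (i : ℕ) = A.sum + k + 1 → blockIdx A (i : ℕ) = A.length :=
        fun h => blockIdx_ge A _ (by omega)
      have hg2 : (j : ℕ) = A.sum + k + 1 → blockIdx A (j : ℕ) = A.length :=
        fun h => blockIdx_ge A _ (by omega)
      split <;> split <;>
        first
          | omega
          | (rename_i hc1 hc2; specialize hg1 hc1; omega)
          | (rename_i hc1 hc2; specialize hg2 hc2; omega)
          | (rename_i hc1 hc2; specialize hg1 hc1; specialize hg2 hc2;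
             exfalso; apply hij; apply Fin.ext; omega)
    · intro B hB ⟨hLB, p, hpB, hpne, hple⟩
      have hIm := hI B hB p hpB (Fin.last _) hLB hpne
      rw [B_bm _ p.isLt, B_bm _ (Fin.last _).isLt] at hIm
      rw [blockIdx_ge A _ hple, blockIdx_ge A _ (by rw [Fin.val_last]; omega)] at hIm
      exact hIm rfl
  · rintro ⟨⟨hpart, hIs, h2⟩, hgood⟩
    refine ⟨hpart, ?_, h2⟩
    intro B hB i hi j hj hij
    have hIsp := hIs B hB i hi j hj hij
    rw [B_bs _ i.isLt, B_bs _ j.isLt] at hIsp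
    rw [B_bm _ i.isLt, B_bm _ j.isLt]
    intro heq
    rw [heq] at hIsp
    by_cases hci : (i : ℕ) = A.sum + k + 1 <;> by_cases hcj : (j : ℕ) = A.sum + k + 1
    · exact hij (Fin.ext (by omega))
    · -- i is the last point, j is not
      have hiL : i = Fin.last (A.sum + k + 1) := Fin.ext (by rw [Fin.val_last]; omega)
      have hjge : A.sum ≤ (j : ℕ) := by
        by_contra hlt
        have := blockIdx_lt A (j : ℕ) (by omega)
        have := blockIdx_ge A (i : ℕ) (by omega)
        omega
      exact hgood B hB ⟨hiL ▸ hi, j, hj, fun h => hij (hiL ▸ h ▸ rfl), hjge⟩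
    · have hjL : j = Fin.last (A.sum + k + 1) := Fin.ext (by rw [Fin.val_last]; omega)
      have hige : A.sum ≤ (i : ℕ) := by
        by_contra hlt
        have := blockIdx_lt A (i : ℕ) (by omega)
        have := blockIdx_ge A (j : ℕ) (by omega)
        omega
      exact hgood B hB ⟨hjL ▸ hj, i, hi, fun h => hij.symm (hjL ▸ h ▸ rfl), hige⟩
    · simp only [if_neg hci, if_neg hcj] at hIsp
      exact hIsp rfl


lemma B_not_mem_upB {p : Fin (A.sum + k + 2)} {B : Finset (Fin (A.sum + k))}
    {y : Fin (A.sum + k + 2)} (hy : y = p ∨ y = Fin.last (A.sum + k + 1)) :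
    y ∉ upB (eB p) B := by
  rw [mem_upB]
  rintro ⟨i, _, rfl⟩
  rcases hy with h | h
  · exact eB_ne_p p i h
  · exact eB_ne_last p i h

lemma B_not_mem_upP {p : Fin (A.sum + k + 2)} {π : Finset (Finset (Fin (A.sum + k)))}
    {C : Finset (Fin (A.sum + k + 2))} (hC : C ∈ upP (eB p) π)
    {y : Fin (A.sum + k + 2)} (hy : y = p ∨ y = Fin.last (A.sum + k + 1)) : y ∉ C := by
  rw [upP, Finset.mem_image] at hC
  obtain ⟨B, _, rfl⟩ := hC
  exact B_not_mem_upB hy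

lemma B_pair_card {p : Fin (A.sum + k + 2)} (hp2 : (p : ℕ) < A.sum + k + 1) :
    ({p, Fin.last (A.sum + k + 1)} : Finset (Fin (A.sum + k + 2))).card = 2 :=
  Finset.card_pair (fun h => by rw [h, Fin.val_last] at hp2; omega)

lemma B_downB_pair {p : Fin (A.sum + k + 2)} :
    downB (eB p) ({p, Fin.last (A.sum + k + 1)} : Finset (Fin (A.sum + k + 2))) = ∅ := by
  ext i
  rw [mem_downB]
  simp only [Finset.mem_insert, Finset.mem_singleton, Finset.notMem_empty, iff_false]
  rintro (h | h)
  · exact eB_ne_p p i h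
  · exact eB_ne_last p i h

lemma B_ebs_zero {p : Fin (A.sum + k + 2)} (i : Fin (A.sum + k)) :
    ((eB p i : Fin (A.sum + k + 2)) : ℕ) ≠ A.sum + k + 1 := by
  intro h
  exact eB_ne_last p i (Fin.ext (by rw [h, Fin.val_last]))

lemma B_res_mem {p : Fin (A.sum + k + 2)} (hp1 : A.sum ≤ (p : ℕ))
    {P : Finset (Finset (Fin (A.sum + k + 2)))}
    (hP : P ∈ Qp ((A ++ [k + 1]) ++ [1]) (A.sum + k + 2)) :
    resP (eB p) P ∈ Qp (A ++ [k]) (A.sum + k) := by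
  obtain ⟨⟨hne, hcov, hdis⟩, hI, h2⟩ := mem_Qp.1 hP
  rw [mem_Qp]
  refine ⟨⟨?_, ?_, ?_⟩, ?_, ?_⟩
  · intro C hC
    rw [mem_resP] at hC
    exact Finset.nonempty_iff_ne_empty.2 hC.1
  · intro i
    obtain ⟨B, hB, hiB⟩ := hcov (eB p i)
    refine ⟨downB (eB p) B, ?_, mem_downB.2 hiB⟩
    rw [mem_resP]
    refine ⟨?_, B, hB, rfl⟩
    intro h
    have : i ∈ downB (eB p) B := mem_downB.2 hiB
    rw [h] at this
    exact absurd this (Finset.notMem_empty i)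
  · intro C hC D hD i hiC hiD
    rw [mem_resP] at hC hD
    obtain ⟨_, B, hB, rfl⟩ := hC
    obtain ⟨_, B', hB', rfl⟩ := hD
    rw [mem_downB] at hiC hiD
    rw [hdis B hB B' hB' _ hiC hiD]
  · intro C hC i hiC j hjC hij
    rw [mem_resP] at hC
    obtain ⟨_, B, hB, rfl⟩ := hC
    rw [mem_downB] at hiC hjC
    have hd := hI B hB _ hiC _ hjC (fun h => hij (eB_injective p h))
    rw [B_bs _ (eB p i).isLt, B_bs _ (eB p j).isLt,
      if_neg (B_ebs_zero i), if_neg (B_ebs_zero j),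
      B_blockIdx_e hp1 i, B_blockIdx_e hp1 j] at hd
    rw [B_br i, B_br j]
    omega
  · intro C hC
    rw [mem_resP] at hC
    obtain ⟨_, B, hB, rfl⟩ := hC
    calc (downB (eB p) B).card ≤ B.card :=
          Finset.card_le_card_of_injOn (eB p) (fun i hi => mem_downB.1 hi)
            (fun i _ j _ h => eB_injective p h)
      _ ≤ 2 := h2 B hB

lemma B_up_mem {p : Fin (A.sum + k + 2)} (hp1 : A.sum ≤ (p : ℕ))
    (hp2 : (p : ℕ) < A.sum + k + 1)
    {π : Finset (Finset (Fin (A.sum + k)))} (hπ : π ∈ Qp (A ++ [k]) (A.sum + k)) :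
    insert {p, Fin.last (A.sum + k + 1)} (upP (eB p) π)
      ∈ Qp ((A ++ [k + 1]) ++ [1]) (A.sum + k + 2) ∧
    ¬ Bgood (insert {p, Fin.last (A.sum + k + 1)} (upP (eB p) π)) := by
  obtain ⟨⟨hne, hcov, hdis⟩, hI, h2⟩ := mem_Qp.1 hπ
  constructor
  · rw [mem_Qp]
    refine ⟨⟨?_, ?_, ?_⟩, ?_, ?_⟩
    · intro B hB
      rcases Finset.mem_insert.1 hB with rfl | hB
      · exact ⟨p, Finset.mem_insert_self _ _⟩
      · rw [upP, Finset.mem_image] at hB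
        obtain ⟨C, hC, rfl⟩ := hB
        exact upB_nonempty (hne C hC)
    · intro y
      by_cases hy : y = p ∨ y = Fin.last (A.sum + k + 1)
      · refine ⟨_, Finset.mem_insert_self _ _, ?_⟩
        rcases hy with rfl | rfl
        · exact Finset.mem_insert_self _ _
        · simp
      · push_neg at hy
        obtain ⟨i, rfl⟩ := eB_surj p (by omega) y hy.1 hy.2
        obtain ⟨B, hB, hiB⟩ := hcov i
        exact ⟨upB (eB p) B, Finset.mem_insert_of_mem (Finset.mem_image_of_mem _ hB),
          mem_upB.2 ⟨i, hiB, rfl⟩⟩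
    · intro B hB C hC y hyB hyC
      rcases Finset.mem_insert.1 hB with rfl | hB <;>
        rcases Finset.mem_insert.1 hC with rfl | hC
      · rfl
      · exfalso
        rw [Finset.mem_insert, Finset.mem_singleton] at hyB
        exact B_not_mem_upP hC hyB hyC
      · exfalso
        rw [Finset.mem_insert, Finset.mem_singleton] at hyC
        exact B_not_mem_upP hB hyC hyB
      · rw [upP, Finset.mem_image] at hB hC
        obtain ⟨B', hB', rfl⟩ := hB
        obtain ⟨C', hC', rfl⟩ := hC
        obtain ⟨i, hiB, rfl⟩ := mem_upB.1 hyB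
        obtain ⟨i', hiC, he⟩ := mem_upB.1 hyC
        have hiC' : i ∈ C' := by rwa [show i' = i from eB_injective p he] at hiC
        rw [hdis B' hB' C' hC' i hiB hiC']
    · intro B hB i hiB j hjB hij
      rcases Finset.mem_insert.1 hB with rfl | hB
      · simp only [Finset.mem_insert, Finset.mem_singleton] at hiB hjB
        have hvp : blockIdx ((A ++ [k + 1]) ++ [1]) (p : ℕ) = A.length := by
          rw [B_bs _ p.isLt, if_neg (by omega), blockIdx_ge A _ hp1]
          omega
        have hvL : blockIdx ((A ++ [k + 1]) ++ [1])
            ((Fin.last (A.sum + k + 1) : Fin (A.sum + k + 2)) : ℕ) = A.length + 1 := by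
          rw [B_bs _ (Fin.last (A.sum + k + 1)).isLt, if_pos (by rw [Fin.val_last]),
            blockIdx_ge A _ (by rw [Fin.val_last]; omega)]
        rcases hiB with h | h <;> rcases hjB with h' | h'
        · exact absurd (h.trans h'.symm) hij
        · rw [h, h', hvp, hvL]
          omega
        · rw [h, h', hvp, hvL]
          omega
        · exact absurd (h.trans h'.symm) hij
      · rw [upP, Finset.mem_image] at hB
        obtain ⟨C, hC, rfl⟩ := hB
        obtain ⟨a, ha, rfl⟩ := mem_upB.1 hiB
        obtain ⟨b, hb, rfl⟩ := mem_upB.1 hjB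
        have hd := hI C hC _ ha _ hb (fun h => hij (by rw [h]))
        rw [B_br a, B_br b] at hd
        rw [B_bs _ (eB p a).isLt, B_bs _ (eB p b).isLt,
          if_neg (B_ebs_zero a), if_neg (B_ebs_zero b),
          B_blockIdx_e hp1 a, B_blockIdx_e hp1 b]
        omega
    · intro B hB
      rcases Finset.mem_insert.1 hB with rfl | hB
      · rw [B_pair_card hp2]
      · rw [upP, Finset.mem_image] at hB
        obtain ⟨C, hC, rfl⟩ := hB
        rw [card_upB (eB_injective p)]
        exact h2 C hC
  · intro hgood
    apply hgood {p, Fin.last (A.sum + k + 1)} (Finset.mem_insert_self _ _)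
    refine ⟨by simp, p, Finset.mem_insert_self _ _, ?_, hp1⟩
    intro h
    rw [h, Fin.val_last] at hp2
    omega

lemma B_dichotomy {P : Finset (Finset (Fin (A.sum + k + 2)))}
    (hP : P ∈ Qp ((A ++ [k + 1]) ++ [1]) (A.sum + k + 2)) (hbad : ¬ Bgood P) :
    ∃ p : Fin (A.sum + k + 2), A.sum ≤ (p : ℕ) ∧ (p : ℕ) < A.sum + k + 1 ∧
      ({p, Fin.last (A.sum + k + 1)} : Finset (Fin (A.sum + k + 2))) ∈ P ∧
      (univ.filter (fun q : Fin (A.sum + k + 2) =>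
        q ≠ Fin.last (A.sum + k + 1) ∧ SameBlock P q (Fin.last (A.sum + k + 1)))) = {p} := by
  obtain ⟨⟨hne, hcov, hdis⟩, hI, h2⟩ := mem_Qp.1 hP
  rw [Bgood] at hbad
  push_neg at hbad
  obtain ⟨B, hB, hLB, p, hpB, hpne, hple⟩ := hbad
  have hBeq : B = {p, Fin.last (A.sum + k + 1)} := by
    apply (Finset.eq_of_subset_of_card_le ?_ ?_).symm
    · intro y hy
      rw [Finset.mem_insert, Finset.mem_singleton] at hy
      rcases hy with rfl | rfl
      · exact hpB
      · exact hLB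
    · rw [Finset.card_pair hpne]
      exact h2 B hB
  subst hBeq
  have hp2 : (p : ℕ) < A.sum + k + 1 := by
    have := p.isLt
    have : (p : ℕ) ≠ A.sum + k + 1 := fun h => hpne (Fin.ext (by rw [h, Fin.val_last]))
    omega
  refine ⟨p, hple, hp2, hB, ?_⟩
  ext q
  simp only [Finset.mem_filter, Finset.mem_univ, true_and, Finset.mem_singleton]
  constructor
  · rintro ⟨hqne, C, hC, hqC, hLC⟩
    have hCB : C = {p, Fin.last (A.sum + k + 1)} := hdis C hC _ hB _ hLC hLB
    rw [hCB, Finset.mem_insert, Finset.mem_singleton] at hqC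
    rcases hqC with h | h
    · exact h
    · exact absurd h hqne
  · rintro rfl
    exact ⟨hpne, _, hB, Finset.mem_insert_self _ _, hLB⟩

lemma B_recon {p : Fin (A.sum + k + 2)} (hp2 : (p : ℕ) < A.sum + k + 1)
    {P : Finset (Finset (Fin (A.sum + k + 2)))}
    (hP : P ∈ Qp ((A ++ [k + 1]) ++ [1]) (A.sum + k + 2))
    (hpair : ({p, Fin.last (A.sum + k + 1)} : Finset (Fin (A.sum + k + 2))) ∈ P) :
    insert {p, Fin.last (A.sum + k + 1)} (upP (eB p) (resP (eB p) P)) = P := by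
  obtain ⟨⟨hne, hcov, hdis⟩, hI, h2⟩ := mem_Qp.1 hP
  have hup : upP (eB p) (resP (eB p) P)
      = P.erase {p, Fin.last (A.sum + k + 1)} := by
    ext C
    rw [upP, Finset.mem_image, Finset.mem_erase]
    constructor
    · rintro ⟨C', hC', rfl⟩
      rw [mem_resP] at hC'
      obtain ⟨hC'ne, B, hB, rfl⟩ := hC'
      have hBD : B ≠ {p, Fin.last (A.sum + k + 1)} := by
        rintro rfl
        exact hC'ne B_downB_pair
      have havoid : ∀ y ∈ B, y ≠ p ∧ y ≠ Fin.last (A.sum + k + 1) := by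
        intro y hy
        constructor
        · rintro rfl
          exact hBD (hdis B hB _ hpair _ hy (Finset.mem_insert_self _ _))
        · rintro rfl
          exact hBD (hdis B hB _ hpair _ hy (by simp))
      have hu : upB (eB p) (downB (eB p) B) = B :=
        upB_downB (fun y hy => eB_surj p (by omega) y (havoid y hy).1 (havoid y hy).2)
      rw [hu]
      exact ⟨hBD, hB⟩
    · rintro ⟨hCD, hC⟩
      have havoid : ∀ y ∈ C, y ≠ p ∧ y ≠ Fin.last (A.sum + k + 1) := by
        intro y hy
        constructor
        · rintro rfl
          exact hCD (hdis C hC _ hpair _ hy (Finset.mem_insert_self _ _))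
        · rintro rfl
          exact hCD (hdis C hC _ hpair _ hy (by simp))
      have hu : upB (eB p) (downB (eB p) C) = C :=
        upB_downB (fun y hy => eB_surj p (by omega) y (havoid y hy).1 (havoid y hy).2)
      refine ⟨downB (eB p) C, ?_, hu⟩
      rw [mem_resP]
      refine ⟨?_, C, hC, rfl⟩
      obtain ⟨y, hy⟩ := hne C hC
      obtain ⟨i, rfl⟩ := eB_surj p (by omega) y (havoid y hy).1 (havoid y hy).2
      exact Finset.ne_empty_of_mem (mem_downB.2 hy)
  rw [hup, Finset.insert_erase hpair]

lemma B_resP_upP {p : Fin (A.sum + k + 2)} {π : Finset (Finset (Fin (A.sum + k)))}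
    (hne : ∀ B ∈ π, B.Nonempty) : resP (eB p) (upP (eB p) π) = π := by
  rw [resP, upP, Finset.image_image]
  have h1 : π.image (downB (eB p) ∘ upB (eB p)) = π := by
    rw [Finset.image_congr (g := id), Finset.image_id]
    intro B _
    exact downB_upB (eB_injective p) B
  rw [h1]
  apply Finset.erase_eq_of_notMem
  intro h
  obtain ⟨y, hy⟩ := hne ∅ h
  exact Finset.notMem_empty y hy

lemma B_inv {p : Fin (A.sum + k + 2)} (hp2 : (p : ℕ) < A.sum + k + 1)
    {π : Finset (Finset (Fin (A.sum + k)))} (hπ : π ∈ Qp (A ++ [k]) (A.sum + k)) :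
    resP (eB p) (insert {p, Fin.last (A.sum + k + 1)} (upP (eB p) π)) = π ∧
    (univ.filter (fun q : Fin (A.sum + k + 2) =>
      q ≠ Fin.last (A.sum + k + 1) ∧
      SameBlock (insert {p, Fin.last (A.sum + k + 1)} (upP (eB p) π)) q
        (Fin.last (A.sum + k + 1)))) = {p} := by
  obtain ⟨⟨hne, hcov, hdis⟩, hI, h2⟩ := mem_Qp.1 hπ
  constructor
  · rw [resP, Finset.image_insert, B_downB_pair,
      Finset.erase_insert_eq_erase _ _, ← resP]
    exact B_resP_upP hne
  · ext q
    simp only [Finset.mem_filter, Finset.mem_univ, true_and, Finset.mem_singleton]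
    constructor
    · rintro ⟨hqne, C, hC, hqC, hLC⟩
      rcases Finset.mem_insert.1 hC with rfl | hC
      · rw [Finset.mem_insert, Finset.mem_singleton] at hqC
        rcases hqC with h | h
        · exact h
        · exact absurd h hqne
      · exact absurd hLC (B_not_mem_upP hC (Or.inr rfl))
    · rintro rfl
      refine ⟨fun h => by rw [h, Fin.val_last] at hp2; omega,
        _, Finset.mem_insert_self _ _, Finset.mem_insert_self _ _, by simp⟩

lemma B_count {p : Fin (A.sum + k + 2)} (hp2 : (p : ℕ) < A.sum + k + 1)
    {π : Finset (Finset (Fin (A.sum + k)))} :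
    s2count (insert {p, Fin.last (A.sum + k + 1)} (upP (eB p) π)) = s2count π + 1 ∧
    scount (insert {p, Fin.last (A.sum + k + 1)} (upP (eB p) π)) = scount π := by
  have hD : ({p, Fin.last (A.sum + k + 1)} : Finset (Fin (A.sum + k + 2)))
      ∉ upP (eB p) π :=
    fun h => B_not_mem_upP h (Or.inl rfl) (Finset.mem_insert_self _ _)
  constructor
  · rw [s2count_insert_two hD (B_pair_card hp2), s2count_upP (eB_injective p)]
  · rw [scount_insert_two (B_pair_card hp2), scount_upP (eB_injective p)]

lemma B_pset_card :
    (univ.filter (fun p : Fin (A.sum + k + 2) =>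
      A.sum ≤ (p : ℕ) ∧ (p : ℕ) < A.sum + k + 1)).card = k + 1 := by
  rw [show k + 1 = (Finset.range (k+1)).card from (Finset.card_range _).symm]
  apply Finset.card_bij (fun (p : Fin (A.sum + k + 2)) _ => (p : ℕ) - A.sum)
  · intro p hp
    rw [Finset.mem_filter] at hp
    rw [Finset.mem_range]
    omega
  · intro p hp q hq h
    rw [Finset.mem_filter] at hp hq
    apply Fin.ext
    omega
  · intro a ha
    rw [Finset.mem_range] at ha
    refine ⟨⟨A.sum + a, by omega⟩, ?_, ?_⟩
    · rw [Finset.mem_filter]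
      refine ⟨Finset.mem_univ _, by simp; omega⟩
    · simp

lemma B_bad_sum (x t : ℝ) :
    ∑ P ∈ (Qp ((A ++ [k + 1]) ++ [1]) (A.sum + k + 2)).filter (fun P => ¬ Bgood P),
        t ^ s2count P * hermiteP x t (scount P)
      = (k + 1) * t * S x t (A ++ [k]) (A.sum + k) := by
  classical
  have key : ∑ P ∈ (Qp ((A ++ [k + 1]) ++ [1]) (A.sum + k + 2)).filter (fun P => ¬ Bgood P),
        t ^ s2count P * hermiteP x t (scount P)
      = ∑ q ∈ (univ.filter (fun p : Fin (A.sum + k + 2) =>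
            A.sum ≤ (p : ℕ) ∧ (p : ℕ) < A.sum + k + 1)) ×ˢ Qp (A ++ [k]) (A.sum + k),
          t ^ (s2count q.2 + 1) * hermiteP x t (scount q.2) := by
    apply Finset.sum_nbij'
      (i := fun P => (
        (if h : (univ.filter (fun q : Fin (A.sum + k + 2) =>
            q ≠ Fin.last (A.sum + k + 1) ∧
            SameBlock P q (Fin.last (A.sum + k + 1)))).Nonempty
          then (univ.filter (fun q : Fin (A.sum + k + 2) =>
            q ≠ Fin.last (A.sum + k + 1) ∧
            SameBlock P q (Fin.last (A.sum + k + 1)))).min' h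
          else Fin.last (A.sum + k + 1)),
        resP (eB (if h : (univ.filter (fun q : Fin (A.sum + k + 2) =>
            q ≠ Fin.last (A.sum + k + 1) ∧
            SameBlock P q (Fin.last (A.sum + k + 1)))).Nonempty
          then (univ.filter (fun q : Fin (A.sum + k + 2) =>
            q ≠ Fin.last (A.sum + k + 1) ∧
            SameBlock P q (Fin.last (A.sum + k + 1)))).min' h
          else Fin.last (A.sum + k + 1))) P))
      (j := fun q => insert {q.1, Fin.last (A.sum + k + 1)} (upP (eB q.1) q.2))
    · intro P hP
      rw [Finset.mem_filter] at hP
      obtain ⟨hPQ, hPbad⟩ := hP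
      obtain ⟨p, hp1, hp2, hpair, hcands⟩ := B_dichotomy hPQ hPbad
      rw [hcands, dif_pos (Finset.singleton_nonempty p), Finset.min'_singleton]
      rw [Finset.mem_product]
      constructor
      · rw [Finset.mem_filter]
        exact ⟨Finset.mem_univ _, hp1, hp2⟩
      · exact B_res_mem hp1 hPQ
    · rintro ⟨p, π⟩ hq
      rw [Finset.mem_product, Finset.mem_filter] at hq
      obtain ⟨⟨_, hp1, hp2⟩, hπ⟩ := hq
      rw [Finset.mem_filter]
      exact ⟨(B_up_mem hp1 hp2 hπ).1, (B_up_mem hp1 hp2 hπ).2⟩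
    · intro P hP
      rw [Finset.mem_filter] at hP
      obtain ⟨hPQ, hPbad⟩ := hP
      obtain ⟨p, hp1, hp2, hpair, hcands⟩ := B_dichotomy hPQ hPbad
      rw [hcands, dif_pos (Finset.singleton_nonempty p), Finset.min'_singleton]
      exact B_recon hp2 hPQ hpair
    · rintro ⟨p, π⟩ hq
      rw [Finset.mem_product, Finset.mem_filter] at hq
      obtain ⟨⟨_, hp1, hp2⟩, hπ⟩ := hq
      obtain ⟨h1, h2⟩ := B_inv hp2 hπ
      dsimp only
      rw [h2, dif_pos (Finset.singleton_nonempty p), Finset.min'_singleton]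
      rw [Prod.mk.injEq]
      exact ⟨rfl, h1⟩
    · intro P hP
      rw [Finset.mem_filter] at hP
      obtain ⟨hPQ, hPbad⟩ := hP
      obtain ⟨p, hp1, hp2, hpair, hcands⟩ := B_dichotomy hPQ hPbad
      rw [hcands, dif_pos (Finset.singleton_nonempty p), Finset.min'_singleton]
      dsimp only
      obtain ⟨h1, h2⟩ := B_count (π := resP (eB p) P) hp2
      conv_lhs => rw [← B_recon hp2 hPQ hpair]
      rw [h1, h2]
  rw [key, Finset.sum_product]
  have hinner : ∀ p ∈ (univ.filter (fun p : Fin (A.sum + k + 2) =>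
      A.sum ≤ (p : ℕ) ∧ (p : ℕ) < A.sum + k + 1)),
      (∑ π ∈ Qp (A ++ [k]) (A.sum + k), t ^ (s2count π + 1) * hermiteP x t (scount π))
        = t * S x t (A ++ [k]) (A.sum + k) := by
    intro p _
    rw [S, Finset.mul_sum]
    apply Finset.sum_congr rfl
    intro π _
    rw [pow_succ]
    ring
  rw [Finset.sum_congr rfl hinner, Finset.sum_const, B_pset_card, nsmul_eq_mul]
  push_cast
  ring


lemma stepB (x t : ℝ) :
    S x t (A ++ [k + 2]) (A.sum + k + 2)
      = S x t ((A ++ [k + 1]) ++ [1]) (A.sum + k + 2)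
        - (k + 1) * t * S x t (A ++ [k]) (A.sum + k) := by
  classical
  have h1 : S x t (A ++ [k + 2]) (A.sum + k + 2)
      = ∑ P ∈ (Qp ((A ++ [k + 1]) ++ [1]) (A.sum + k + 2)).filter Bgood,
          t ^ s2count P * hermiteP x t (scount P) := by
    rw [S, B_Qp_eq]
  have h2 : S x t ((A ++ [k + 1]) ++ [1]) (A.sum + k + 2)
      = (∑ P ∈ (Qp ((A ++ [k + 1]) ++ [1]) (A.sum + k + 2)).filter Bgood,
          t ^ s2count P * hermiteP x t (scount P))
        + ∑ P ∈ (Qp ((A ++ [k + 1]) ++ [1]) (A.sum + k + 2)).filter (fun P => ¬ Bgood P),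
            t ^ s2count P * hermiteP x t (scount P) :=
    (Finset.sum_filter_add_sum_filter_not _ _ _).symm
  rw [h1, h2, B_bad_sum]
  ring

end StepB

lemma S_append_zero (x t : ℝ) (A : List ℕ) : S x t (A ++ [0]) A.sum = S x t A A.sum := by
  have hb : ∀ i : Fin A.sum, blockIdx (A ++ [0]) (i : ℕ) = blockIdx A (i : ℕ) := by
    intro i
    rw [blockIdx_append, if_neg (by have := i.isLt; omega)]
    omega
  have hQ : Qp (A ++ [0]) A.sum = Qp A A.sum := by
    ext P
    rw [mem_Qp, mem_Qp]
    constructor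
    · rintro ⟨h1, h2, h3⟩
      refine ⟨h1, ?_, h3⟩
      intro B hB i hi j hj hij
      have := h2 B hB i hi j hj hij
      rwa [hb i, hb j] at this
    · rintro ⟨h1, h2, h3⟩
      refine ⟨h1, ?_, h3⟩
      intro B hB i hi j hj hij
      rw [hb i, hb j]
      exact h2 B hB i hi j hj hij
  rw [S, S, hQ]

lemma main (x t : ℝ) : ∀ n : ℕ, ∀ ns : List ℕ, (∀ m ∈ ns, 0 < m) → ns.sum = n →
    (ns.map (hermiteP x t)).prod = S x t ns n := by
  intro n
  induction n using Nat.strong_induction_on with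
  | _ n IH =>
    intro ns hpos hsum
    rcases List.eq_nil_or_concat ns with rfl | ⟨B, m, rfl⟩
    · simp only [List.sum_nil] at hsum
      subst hsum
      simp [S_nil]
    · rw [List.concat_eq_append] at hpos hsum ⊢
      have hm : 0 < m := hpos m (by simp)
      have hBpos : ∀ m' ∈ B, 0 < m' := fun m' h => hpos m' (by simp [h])
      have hsum' : B.sum + m = n := by simpa using hsum
      have hprod : ((B ++ [m]).map (hermiteP x t)).prod
          = (B.map (hermiteP x t)).prod * hermiteP x t m := by
        simp
      have hsub : ∀ j : ℕ, B.sum + j < n →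
          ((B ++ [j]).map (hermiteP x t)).prod = S x t (B ++ [j]) (B.sum + j) := by
        intro j hj
        cases j with
        | zero =>
          have hB := IH B.sum (by omega) B hBpos rfl
          calc ((B ++ [0]).map (hermiteP x t)).prod
              = (B.map (hermiteP x t)).prod := by simp [hermiteP]
            _ = S x t B B.sum := hB
            _ = S x t (B ++ [0]) (B.sum + 0) := by rw [Nat.add_zero, S_append_zero]
        | succ j' =>
          refine IH (B.sum + (j' + 1)) (by omega) (B ++ [j' + 1]) ?_ (by simp)
          intro m' h
          rcases List.mem_append.1 h with h | h
          · exact hBpos m' h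
          · simp only [List.mem_singleton] at h
            omega
      by_cases hm1 : m = 1
      · subst hm1
        have hA := IH B.sum (by omega) B hBpos rfl
        have hs := stepA (ns := B) (n := B.sum) x t rfl
        rw [show n = B.sum + 1 from by omega]
        rw [hprod, hs, ← hA]
        simp [hermiteP]
        ring
      · obtain ⟨k, rfl⟩ : ∃ k, m = k + 2 := ⟨m - 2, by omega⟩
        have h1 : ((B ++ [k + 1]).map (hermiteP x t)).prod
            = S x t (B ++ [k + 1]) (B.sum + (k + 1)) := hsub (k + 1) (by omega)
        rw [show B.sum + (k + 1) = B.sum + k + 1 from by omega] at h1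
        have h0 : ((B ++ [k]).map (hermiteP x t)).prod
            = S x t (B ++ [k]) (B.sum + k) := hsub k (by omega)
        have hsA := stepA (ns := B ++ [k + 1]) (n := B.sum + k + 1) x t (by simp; omega)
        rw [show B.sum + k + 1 + 1 = B.sum + k + 2 from by omega] at hsA
        have hsB := stepB (A := B) (k := k) x t
        have hh : hermiteP x t (k + 2)
            = x * hermiteP x t (k + 1) - ((k : ℝ) + 1) * t * hermiteP x t k := by
          have h := hermite_succ x t (k + 1)
          push_cast at h
          simpa using h
        rw [show n = B.sum + k + 2 from by omega]
        rw [hprod, hsB, hsA, hh, ← h1, ← h0]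
        have hpm : ((B ++ [k + 1]).map (hermiteP x t)).prod
            = (B.map (hermiteP x t)).prod * hermiteP x t (k + 1) := by simp
        have hpm0 : ((B ++ [k]).map (hermiteP x t)).prod
            = (B.map (hermiteP x t)).prod * hermiteP x t k := by simp
        rw [hpm, hpm0]
        push_cast
        ring

end HermiteLinAux




/-- Linearization of products of Hermite polynomials via inhomogeneous
partitions with blocks of size at most two. -/
theorem statement0 (x t : ℝ) (ns : List ℕ) (hne : ns ≠ [])
    (hpos : ∀ m ∈ ns, 0 < m) :
    (ns.map (hermiteP x t)).prod =
      ∑ P ∈ (univ : Finset (Finset (Finset (Fin ns.sum)))).filter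
          (fun P => IsPartition P ∧ Inhom ns P ∧ ∀ B ∈ P, B.card ≤ 2),
        t ^ s2count P * hermiteP x t (scount P) :=
  HermiteLinAux.main x t ns.sum ns hpos rfl
end
end

section
/- For all real x, all t ≥ 0, and all positive integers n_1, …, n_k with n = n_1 + ⋯ + n_k, the product of Hermite polynomials expands in the Hermite basis as ∏_{j=1}^k H_{n_j}(x,t) = Σ_{m=0}^n (1/m!) · (√t)^{n−m} · |𝒫_2(n_1,…,n_k,m)| · H_m(x,t), where |𝒫_2(n_1,…,n_k,m)| is the number of inhomogeneous pair partitions of a set of n+m elements with respect to the interval decomposition into blocks of sizes n_1,…,n_k,m. -/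
open Finset MeasureTheory ProbabilityTheory
open scoped Classical

noncomputable section

lemma take_sum_mono (L : List ℕ) {a b : ℕ} (h : a ≤ b) : (L.take a).sum ≤ (L.take b).sum := by
  induction L generalizing a b with
  | nil => simp
  | cons x xs ih =>
    cases a with
    | zero => simp
    | succ a' =>
      cases b with
      | zero => omega
      | succ b' => simpa using ih (by omega)

lemma countP_range_lt {n j : ℕ} (h : j ≤ n) :
    (List.range n).countP (fun r => decide (r < j)) = j := by
  induction n with
  | zero => simp; omega
  | succ n ih =>
    rw [List.range_succ, List.countP_append]
    rcases Nat.lt_or_ge n j with hc | hc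
    · have hj : j = n + 1 := by omega
      subst hj
      rw [List.countP_eq_length.2 (by intro a ha; simp only [List.mem_range] at ha; simp; omega)]
      simp
    · rw [ih hc]
      simp [List.countP_cons, Nat.not_lt.2 hc]

lemma blockIdx_eq {L : List ℕ} {j i : ℕ} (h1 : (L.take j).sum ≤ i)
    (h2 : i < (L.take (j + 1)).sum) : blockIdx L i = j := by
  have hj : j < L.length := by
    by_contra hc
    push_neg at hc
    rw [List.take_of_length_le hc] at h1
    rw [List.take_of_length_le (by omega : L.length ≤ j + 1)] at h2
    omega
  unfold blockIdx
  rw [List.countP_congr (q := fun r => decide (r < j)) ?_, countP_range_lt (by omega)]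
  intro r _
  simp only [decide_eq_true_eq]
  constructor
  · intro hh
    by_contra hcon
    have : (L.take (j + 1)).sum ≤ (L.take (r + 1)).sum := take_sum_mono L (by omega)
    omega
  · intro hr
    exact le_trans (take_sum_mono L (by omega : r + 1 ≤ j)) h1

lemma blockIdx_lt {L : List ℕ} {i : ℕ} (h : i < L.sum) : blockIdx L i < L.length := by
  have hlen : 0 < L.length := by rcases L with _ | _ <;> simp_all
  have key : ¬ ((L.take (L.length - 1 + 1)).sum ≤ i) := by
    rw [show L.length - 1 + 1 = L.length by omega, List.take_length]; omega
  have hle : blockIdx L i ≤ L.length := by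
    unfold blockIdx
    calc List.countP _ (List.range L.length) ≤ (List.range L.length).length :=
          List.countP_le_length
      _ = L.length := List.length_range
  rcases eq_or_lt_of_le hle with heq | hlt
  · exfalso
    unfold blockIdx at heq
    have := List.countP_eq_length.1 (heq.trans (List.length_range (n := L.length)).symm)
      (L.length - 1) (by simp only [List.mem_range]; omega)
    simp only [decide_eq_true_eq] at this
    exact key this
  · exact hlt

lemma blockIdx_append_left {L M : List ℕ} {i : ℕ} (h : i < L.sum) :
    blockIdx (L ++ M) i = blockIdx L i := by
  unfold blockIdx
  rw [List.length_append, List.range_add, List.countP_append]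
  have h2 : (List.countP (fun j => decide (((L ++ M).take (j + 1)).sum ≤ i))
      ((List.range M.length).map (L.length + ·))) = 0 := by
    rw [List.countP_eq_zero]
    intro a ha
    simp only [List.mem_map] at ha
    obtain ⟨r, _, rfl⟩ := ha
    simp only [decide_eq_true_eq]
    rw [List.take_append, List.sum_append,
      List.take_of_length_le (by omega : L.length ≤ L.length + r + 1)]
    omega
  rw [h2, Nat.add_zero]
  apply List.countP_congr
  intro r hr
  simp only [List.mem_range] at hr
  rw [List.take_append, show r + 1 - L.length = 0 by omega]
  simp

lemma blockIdx_append_right {L M : List ℕ} {i : ℕ} (h : L.sum ≤ i) :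
    blockIdx (L ++ M) i = L.length + blockIdx M (i - L.sum) := by
  unfold blockIdx
  rw [List.length_append, List.range_add, List.countP_append]
  have h1 : List.countP (fun j => decide (((L ++ M).take (j + 1)).sum ≤ i))
      (List.range L.length) = (List.range L.length).length := by
    rw [List.countP_eq_length]
    intro r hr
    simp only [List.mem_range] at hr
    simp only [decide_eq_true_eq]
    rw [List.take_append, show r + 1 - L.length = 0 by omega]
    simp only [List.take_zero, List.append_nil]
    exact le_trans (le_trans (take_sum_mono L (by omega : r + 1 ≤ L.length))
      (by rw [List.take_length])) h
  rw [h1, List.length_range]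
  congr 1
  rw [List.countP_map]
  apply List.countP_congr
  intro r hr
  simp only [List.mem_range] at hr
  simp only [Function.comp_apply, decide_eq_decide]
  rw [List.take_append,
    List.take_of_length_le (by omega : L.length ≤ L.length + r + 1),
    List.sum_append, show L.length + r + 1 - L.length = r + 1 by omega]
  simp only [decide_eq_true_eq]
  omega

lemma blockIdx_nil (u : ℕ) : blockIdx [] u = 0 := rfl

lemma blockIdx_cons_lt {a : ℕ} {R : List ℕ} {u : ℕ} (h : u < a) :
    blockIdx (a :: R) u = 0 := by
  apply blockIdx_eq (j := 0) (by simp) (by simpa using h)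

lemma blockIdx_cons_ge {a : ℕ} {R : List ℕ} {u : ℕ} (h : a ≤ u) :
    blockIdx (a :: R) u = 1 + blockIdx R (u - a) := by
  have : (a :: R) = [a] ++ R := rfl
  rw [this, blockIdx_append_right (by simpa using h)]
  simp

lemma blockIdx_append_eq_iff (L M : List ℕ) (i j : ℕ) :
    blockIdx (L ++ M) i = blockIdx (L ++ M) j ↔
      ((i < L.sum ∧ j < L.sum ∧ blockIdx L i = blockIdx L j) ∨
       (L.sum ≤ i ∧ L.sum ≤ j ∧ blockIdx M (i - L.sum) = blockIdx M (j - L.sum))) := by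
  rcases Nat.lt_or_ge i L.sum with hi | hi <;> rcases Nat.lt_or_ge j L.sum with hj | hj
  · rw [blockIdx_append_left hi, blockIdx_append_left hj]
    constructor
    · intro h; exact Or.inl ⟨hi, hj, h⟩
    · rintro (⟨_, _, h⟩ | ⟨h, _, _⟩)
      · exact h
      · omega
  · rw [blockIdx_append_left hi, blockIdx_append_right hj]
    have := blockIdx_lt (L := L) (i := i) hi
    constructor
    · intro h; omega
    · rintro (⟨_, h, _⟩ | ⟨h, _, _⟩) <;> omega
  · rw [blockIdx_append_right hi, blockIdx_append_left hj]
    have := blockIdx_lt (L := L) (i := j) hj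
    constructor
    · intro h; omega
    · rintro (⟨h, _, _⟩ | ⟨_, h, _⟩) <;> omega
  · rw [blockIdx_append_right hi, blockIdx_append_right hj]
    constructor
    · intro h; exact Or.inr ⟨hi, hj, by omega⟩
    · rintro (⟨h, _, _⟩ | ⟨_, _, h⟩)
      · omega
      · omega

lemma blockIdx_cons_eq_iff (a : ℕ) (R : List ℕ) (i j : ℕ) :
    blockIdx (a :: R) i = blockIdx (a :: R) j ↔
      ((i < a ∧ j < a) ∨
       (a ≤ i ∧ a ≤ j ∧ blockIdx R (i - a) = blockIdx R (j - a))) := by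
  have h := blockIdx_append_eq_iff ([a]) R i j
  simp only [List.singleton_append] at h
  rw [h]
  have : ∀ u v : ℕ, u < a → v < a → blockIdx ([a]) u = blockIdx ([a]) v := by
    intro u v hu hv
    rw [blockIdx_cons_lt hu, blockIdx_cons_lt hv]
  constructor
  · rintro (⟨h1, h2, _⟩ | h) ; · exact Or.inl ⟨by simpa using h1, by simpa using h2⟩
    · right; simpa using h
  · rintro (⟨h1, h2⟩ | h)
    · exact Or.inl ⟨by simpa using h1, by simpa using h2, this _ _ h1 h2⟩
    · right; simpa using h

def PP (ms : List ℕ) (N : ℕ) : Finset (Finset (Finset (Fin N))) :=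
  (univ : Finset (Finset (Finset (Fin N)))).filter
    (fun P => IsPartition P ∧ Inhom ms P ∧ ∀ B ∈ P, B.card = 2)

lemma PP_card_congr (ms : List ℕ) {N N' : ℕ} (h : N = N') :
    (PP ms N).card = (PP ms N').card := by subst h; rfl

lemma inhom_congr {N : ℕ} {m1 m2 : List ℕ}
    (h : ∀ i j : Fin N, i ≠ j →
      (blockIdx m1 (i : ℕ) = blockIdx m1 (j : ℕ) ↔ blockIdx m2 (i : ℕ) = blockIdx m2 (j : ℕ)))
    (P : Finset (Finset (Fin N))) : Inhom m1 P ↔ Inhom m2 P := by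
  constructor <;> intro hI B hB i hi j hj hij heq <;> exact hI B hB i hi j hj hij (by
    first
      | exact (h i j hij).mpr heq
      | exact (h i j hij).mp heq)

lemma inhom_tail {N : ℕ} {M : List ℕ} (R : List ℕ) (hN : N ≤ M.sum)
    (P : Finset (Finset (Fin N))) : Inhom (M ++ R) P ↔ Inhom M P := by
  apply inhom_congr
  intro i j _
  rw [blockIdx_append_left (lt_of_lt_of_le i.isLt hN),
    blockIdx_append_left (lt_of_lt_of_le j.isLt hN)]

lemma inhom_zero_mid {N : ℕ} (L R : List ℕ) (P : Finset (Finset (Fin N))) :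
    Inhom (L ++ [0] ++ R) P ↔ Inhom (L ++ R) P := by
  apply inhom_congr
  intro i j _
  have h0 : (L ++ [0] ++ R) = L ++ ((0 : ℕ) :: R) := by simp
  rw [h0, blockIdx_append_eq_iff, blockIdx_append_eq_iff]
  have hi : blockIdx ((0:ℕ) :: R) ((i:ℕ) - L.sum) = 1 + blockIdx R ((i:ℕ) - L.sum) := by
    rw [blockIdx_cons_ge (Nat.zero_le _)]; simp
  have hj : blockIdx ((0:ℕ) :: R) ((j:ℕ) - L.sum) = 1 + blockIdx R ((j:ℕ) - L.sum) := by
    rw [blockIdx_cons_ge (Nat.zero_le _)]; simp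
  rw [hi, hj]
  omega

lemma inhom_merge {N : ℕ} (L : List ℕ) (b c : ℕ) (R : List ℕ)
    (P : Finset (Finset (Fin N))) :
    Inhom (L ++ [b + c] ++ R) P ↔ Inhom (L ++ [b, c] ++ R) P ∧
      ∀ B ∈ P, ∀ i ∈ B, ∀ j ∈ B,
        ¬(L.sum ≤ (i:ℕ) ∧ (i:ℕ) < L.sum + b ∧
          L.sum + b ≤ (j:ℕ) ∧ (j:ℕ) < L.sum + b + c) := by
  have key : ∀ i j : ℕ,
      (blockIdx (L ++ [b + c] ++ R) i = blockIdx (L ++ [b + c] ++ R) j ↔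
        (blockIdx (L ++ [b, c] ++ R) i = blockIdx (L ++ [b, c] ++ R) j ∨
         (L.sum ≤ i ∧ i < L.sum + b ∧ L.sum + b ≤ j ∧ j < L.sum + b + c) ∨
         (L.sum ≤ j ∧ j < L.sum + b ∧ L.sum + b ≤ i ∧ i < L.sum + b + c))) := by
    intro i j
    have h1 : (L ++ [b + c] ++ R) = L ++ ((b + c) :: R) := by simp
    have h2 : (L ++ [b, c] ++ R) = L ++ ((b : ℕ) :: (c : ℕ) :: R) := by simp
    rw [h1, h2, blockIdx_append_eq_iff, blockIdx_append_eq_iff,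
      blockIdx_cons_eq_iff, blockIdx_cons_eq_iff, blockIdx_cons_eq_iff]
    simp only [Nat.sub_sub, Nat.add_assoc]
    omega
  constructor
  · intro hI
    constructor
    · intro B hB i hi j hj hij heq
      exact hI B hB i hi j hj hij ((key i j).mpr (Or.inl heq))
    · intro B hB i hi j hj hcross
      have hij : i ≠ j := by
        intro hc; subst hc; omega
      exact hI B hB i hi j hj hij ((key i j).mpr (Or.inr (Or.inl hcross)))
  · rintro ⟨hI, hX⟩ B hB i hi j hj hij heq
    rcases (key i j).mp heq with h | h | h
    · exact hI B hB i hi j hj hij h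
    · exact hX B hB i hi j hj h
    · exact hX B hB j hj i hi h

lemma card_filter_interval {n a k : ℕ} (h : a + k ≤ n) :
    ((univ : Finset (Fin n)).filter (fun w : Fin n => a ≤ (w:ℕ) ∧ (w:ℕ) < a + k)).card = k := by
  have hk : k = (Finset.Ico a (a + k)).card := by rw [Nat.card_Ico]; omega
  conv_rhs => rw [hk]
  apply Finset.card_bij (fun (w : Fin n) _ => (w : ℕ))
  · intro w hw
    simp only [mem_filter] at hw
    simp only [Finset.mem_Ico]
    omega
  · intro w1 h1 w2 h2 hww
    exact Fin.ext hww
  · intro b hb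
    simp only [Finset.mem_Ico] at hb
    refine ⟨⟨b, by omega⟩, ?_, rfl⟩
    simp only [mem_filter, mem_univ, true_and]
    exact ⟨hb.1, hb.2⟩

lemma mem_PP {ms : List ℕ} {N : ℕ} {P : Finset (Finset (Fin N))} :
    P ∈ PP ms N ↔ IsPartition P ∧ Inhom ms P ∧ ∀ B ∈ P, B.card = 2 := by
  simp [PP]

lemma exists_partner {ms : List ℕ} {N : ℕ} {P : Finset (Finset (Fin N))}
    (hP : P ∈ PP ms N) (y : Fin N) :
    ∃ z, z ≠ y ∧ ({y, z} : Finset (Fin N)) ∈ P := by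
  obtain ⟨⟨hne, hcov, hun⟩, hinh, hpair⟩ := mem_PP.1 hP
  obtain ⟨B, hB, hyB⟩ := hcov y
  obtain ⟨u, v, huv, rfl⟩ := Finset.card_eq_two.1 (hpair B hB)
  rcases Finset.mem_insert.1 hyB with rfl | hy2
  · exact ⟨v, fun hc => huv hc.symm, by simpa using hB⟩
  · rcases Finset.mem_singleton.1 hy2 with rfl
    refine ⟨u, fun hc => huv hc, ?_⟩
    rwa [Finset.pair_comm]

lemma partner_unique {ms : List ℕ} {N : ℕ} {P : Finset (Finset (Fin N))}
    (hP : P ∈ PP ms N) {y z z' : Fin N}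
    (h1 : ({y, z} : Finset (Fin N)) ∈ P) (h2 : ({y, z'} : Finset (Fin N)) ∈ P) :
    z = z' := by
  obtain ⟨⟨hne, hcov, hun⟩, hinh, hpair⟩ := mem_PP.1 hP
  have heq : ({y, z} : Finset (Fin N)) = {y, z'} :=
    hun _ h1 _ h2 y (Finset.mem_insert_self _ _) (Finset.mem_insert_self _ _)
  have hz : z ≠ y := by
    intro hc; subst hc
    have := hpair _ h1
    simp at this
  have hz' : z' ≠ y := by
    intro hc; subst hc
    have := hpair _ h2
    simp at this
  have : z ∈ ({y, z'} : Finset (Fin N)) := heq ▸ Finset.mem_insert_of_mem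
    (Finset.mem_singleton_self _)
  rcases Finset.mem_insert.1 this with h | h
  · exact absurd h hz
  · exact Finset.mem_singleton.1 h

lemma card_biUnion_partner (ms : List ℕ) (N : ℕ) (y : Fin N) (Z : Finset (Fin N)) :
    ((PP ms N).filter (fun P => ∃ z ∈ Z, ({y, z} : Finset (Fin N)) ∈ P)).card
      = ∑ z ∈ Z, ((PP ms N).filter (fun P => ({y, z} : Finset (Fin N)) ∈ P)).card := by
  rw [← Finset.card_biUnion]
  · congr 1
    ext P
    simp only [Finset.mem_biUnion, mem_filter]
    tauto
  · intro z hz z' hz' hne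
    rw [Function.onFun, Finset.disjoint_left]
    intro P hP1 hP2
    simp only [mem_filter] at hP1 hP2
    exact hne (partner_unique hP1.1 hP1.2 hP2.2)

lemma PP_eq_empty {ms : List ℕ} {m N : ℕ} (hN : N = ms.sum + m) (hm : ms.sum < m) :
    PP (ms ++ [m]) N = ∅ := by
  rw [Finset.eq_empty_iff_forall_notMem]
  intro P hP
  have hPP := hP
  obtain ⟨⟨hne, hcov, hun⟩, hinh, hpair⟩ := mem_PP.1 hP
  have hpart : ∀ w : Fin N, ∃ v : Fin N, v ≠ w ∧ ∃ B ∈ P, w ∈ B ∧ v ∈ B := by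
    intro w
    obtain ⟨z, hz, hzP⟩ := exists_partner hPP w
    exact ⟨z, hz, {w, z}, hzP, Finset.mem_insert_self _ _,
      Finset.mem_insert_of_mem (Finset.mem_singleton_self _)⟩
  set f : Fin N → Fin N := fun w => Classical.choose (hpart w) with hf
  have hfspec : ∀ w, f w ≠ w ∧ ∃ B ∈ P, w ∈ B ∧ f w ∈ B :=
    fun w => Classical.choose_spec (hpart w)
  have hblk : ∀ w : Fin N, ms.sum ≤ (w:ℕ) → blockIdx (ms ++ [m]) (w:ℕ) = ms.length := by
    intro w hw
    rw [show ms ++ [m] = ms ++ ((m:ℕ) :: []) from rfl, blockIdx_append_right hw,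
      blockIdx_cons_lt (by omega : (w:ℕ) - ms.sum < m)]
    omega
  have hmaps : ∀ w : Fin N, ms.sum ≤ (w:ℕ) → ((f w : ℕ) < ms.sum) := by
    intro w hw
    by_contra hc
    push_neg at hc
    obtain ⟨hne', B, hB, hwB, hfB⟩ := hfspec w
    exact hinh B hB _ hfB _ hwB hne' (by rw [hblk _ hc, hblk _ hw])
  set T := (univ : Finset (Fin N)).filter (fun w : Fin N => ms.sum ≤ (w:ℕ) ∧ (w:ℕ) < ms.sum + m)
  set S := (univ : Finset (Fin N)).filter (fun w : Fin N => 0 ≤ (w:ℕ) ∧ (w:ℕ) < 0 + ms.sum)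
  have hcard : T.card ≤ S.card := by
    refine Finset.card_le_card_of_injOn f ?_ ?_
    · intro w hw
      simp only [T, Finset.mem_coe, mem_filter] at hw
      simp only [S, Finset.mem_coe, mem_filter, mem_univ, true_and]
      have := hmaps w hw.2.1
      omega
    · intro w1 h1 w2 h2 hww
      simp only [T, mem_filter] at h1 h2
      obtain ⟨hne1, B1, hB1, hw1, hf1⟩ := hfspec w1
      obtain ⟨hne2, B2, hB2, hw2, hf2⟩ := hfspec w2
      rw [hww] at hf1 hne1
      have hBB : B1 = B2 := hun _ hB1 _ hB2 _ hf1 hf2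
      subst hBB
      have hc2 := hpair _ hB1
      obtain ⟨u, v, huv, rfl⟩ := Finset.card_eq_two.1 hc2
      have hmem : ∀ x ∈ ({u, v} : Finset (Fin N)), x ≠ f w2 → x = w2 ∨ x = w1 → True := fun _ _ _ _ => trivial
      clear hmem
      have : w1 ∈ ({u,v} : Finset (Fin N)).erase (f w2) := Finset.mem_erase.2 ⟨hne1.symm, hw1⟩
      have h2' : w2 ∈ ({u,v} : Finset (Fin N)).erase (f w2) := Finset.mem_erase.2 ⟨hne2.symm, hw2⟩
      have hc1 : (({u,v} : Finset (Fin N)).erase (f w2)).card = 1 := by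
        rw [Finset.card_erase_of_mem hf2, hc2]
      exact Finset.card_le_one.1 (le_of_eq hc1) _ this _ h2'
  have hT : T.card = m := card_filter_interval (by omega)
  have hS : S.card = ms.sum := card_filter_interval (by omega)
  omega

lemma PP_delete_card {N N' : ℕ} (ms ms' : List ℕ) (y z : Fin N) (hyz : y ≠ z)
    (f : Fin N' → Fin N) (hfi : Function.Injective f)
    (hfy : ∀ i, f i ≠ y) (hfz : ∀ i, f i ≠ z)
    (hsur : ∀ w : Fin N, w ≠ y → w ≠ z → ∃ i, f i = w)
    (hblk : ∀ i j : Fin N',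
      (blockIdx ms' ((i:Fin N') : ℕ) = blockIdx ms' ((j:Fin N') : ℕ) ↔
        blockIdx ms ((f i : Fin N) : ℕ) = blockIdx ms ((f j : Fin N) : ℕ)))
    (hb : blockIdx ms ((y : Fin N) : ℕ) ≠ blockIdx ms ((z : Fin N) : ℕ)) :
    ((PP ms N).filter (fun P => ({y, z} : Finset (Fin N)) ∈ P)).card = (PP ms' N').card := by
  symm
  set F : Finset (Fin N') → Finset (Fin N) := fun B => B.image f with hF
  set Fi : Finset (Fin N) → Finset (Fin N') := fun B => B.preimage f (hfi.injOn) with hFi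
  have hmemF : ∀ (B : Finset (Fin N')) (w : Fin N'), f w ∈ F B ↔ w ∈ B := by
    intro B w
    constructor
    · intro h
      obtain ⟨u, hu, huw⟩ := Finset.mem_image.1 h
      rwa [← hfi huw]
    · intro h; exact Finset.mem_image_of_mem f h
  have hyF : ∀ B, y ∉ F B := by
    intro B h
    obtain ⟨u, _, hu⟩ := Finset.mem_image.1 h
    exact hfy u hu
  have hzF : ∀ B, z ∉ F B := by
    intro B h
    obtain ⟨u, _, hu⟩ := Finset.mem_image.1 h
    exact hfz u hu
  have hpairF : ∀ B, ({y, z} : Finset (Fin N)) ≠ F B := by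
    intro B h
    exact hyF B (h ▸ Finset.mem_insert_self _ _)
  have hFinj : Function.Injective F := Finset.image_injective hfi
  refine Finset.card_bij'
    (fun Q _ => insert ({y, z} : Finset (Fin N)) (Q.image F))
    (fun P _ => (P.erase ({y, z} : Finset (Fin N))).image Fi) ?hi ?hj ?li ?ri
  case hi =>
    intro Q hQ
    obtain ⟨⟨hne, hcov, hun⟩, hinh, hpair⟩ := mem_PP.1 hQ
    rw [Finset.mem_filter]
    refine ⟨mem_PP.2 ⟨⟨?_, ?_, ?_⟩, ?_, ?_⟩, Finset.mem_insert_self _ _⟩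
    · rintro B hB
      rcases Finset.mem_insert.1 hB with rfl | hB2
      · exact Finset.insert_nonempty _ _
      · obtain ⟨C, hC, rfl⟩ := Finset.mem_image.1 hB2
        obtain ⟨w, hw⟩ := hne C hC
        exact ⟨f w, Finset.mem_image_of_mem f hw⟩
    · intro w
      rcases eq_or_ne w y with rfl | hwy
      · exact ⟨{w, z}, Finset.mem_insert_self _ _, Finset.mem_insert_self _ _⟩
      rcases eq_or_ne w z with rfl | hwz
      · exact ⟨{y, w}, Finset.mem_insert_self _ _,
          Finset.mem_insert_of_mem (Finset.mem_singleton_self _)⟩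
      obtain ⟨i, rfl⟩ := hsur w hwy hwz
      obtain ⟨B, hB, hiB⟩ := hcov i
      exact ⟨F B, Finset.mem_insert_of_mem (Finset.mem_image_of_mem F hB),
        Finset.mem_image_of_mem f hiB⟩
    · intro B hB C hC w hwB hwC
      rcases Finset.mem_insert.1 hB with rfl | hB2 <;>
        rcases Finset.mem_insert.1 hC with rfl | hC2
      · rfl
      · exfalso
        obtain ⟨C', hC', rfl⟩ := Finset.mem_image.1 hC2
        rcases Finset.mem_insert.1 hwB with rfl | hw2
        · exact hyF C' hwC
        · exact hzF C' ((Finset.mem_singleton.1 hw2) ▸ hwC)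
      · exfalso
        obtain ⟨B', hB', rfl⟩ := Finset.mem_image.1 hB2
        rcases Finset.mem_insert.1 hwC with rfl | hw2
        · exact hyF B' hwB
        · exact hzF B' ((Finset.mem_singleton.1 hw2) ▸ hwB)
      · obtain ⟨B', hB', rfl⟩ := Finset.mem_image.1 hB2
        obtain ⟨C', hC', rfl⟩ := Finset.mem_image.1 hC2
        obtain ⟨u, huB, rfl⟩ := Finset.mem_image.1 hwB
        have huC : u ∈ C' := (hmemF C' u).1 hwC
        rw [hun B' hB' C' hC' u huB huC]
    · intro B hB i hi j hj hij
      rcases Finset.mem_insert.1 hB with rfl | hB2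
      · have hmem : ∀ w : Fin N, w ∈ ({y, z} : Finset (Fin N)) → w = y ∨ w = z := by
          intro w hw
          rcases Finset.mem_insert.1 hw with rfl | hw2
          · exact Or.inl rfl
          · exact Or.inr (Finset.mem_singleton.1 hw2)
        rcases hmem i hi with rfl | rfl <;> rcases hmem j hj with rfl | rfl
        · exact absurd rfl hij
        · exact hb
        · exact hb.symm
        · exact absurd rfl hij
      · obtain ⟨B', hB', rfl⟩ := Finset.mem_image.1 hB2
        obtain ⟨u, huB, rfl⟩ := Finset.mem_image.1 hi
        obtain ⟨v, hvB, rfl⟩ := Finset.mem_image.1 hj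
        have huv : u ≠ v := fun h => hij (h ▸ rfl)
        exact fun h => (hinh B' hB' u huB v hvB huv) ((hblk u v).2 h)
    · intro B hB
      rcases Finset.mem_insert.1 hB with rfl | hB2
      · exact Finset.card_pair hyz
      · obtain ⟨B', hB', rfl⟩ := Finset.mem_image.1 hB2
        rw [hF]
        rw [Finset.card_image_of_injective _ hfi]
        exact (mem_PP.1 hQ).2.2 B' hB'
  case hj =>
    intro P hP
    rw [Finset.mem_filter] at hP
    obtain ⟨hPP, hyzP⟩ := hP
    obtain ⟨⟨hne, hcov, hun⟩, hinh, hpair⟩ := mem_PP.1 hPP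
    have hsubr : ∀ B ∈ P.erase ({y, z} : Finset (Fin N)), y ∉ B ∧ z ∉ B := by
      intro B hBe
      obtain ⟨hBne, hB⟩ := Finset.mem_erase.1 hBe
      constructor
      · intro hyB
        exact hBne (hun B hB _ hyzP y hyB (Finset.mem_insert_self _ _))
      · intro hzB
        exact hBne (hun B hB _ hyzP z hzB
          (Finset.mem_insert_of_mem (Finset.mem_singleton_self _)))
    have hFiF : ∀ B ∈ P.erase ({y, z} : Finset (Fin N)), F (Fi B) = B := by
      intro B hBe
      obtain ⟨hyB, hzB⟩ := hsubr B hBe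
      ext w
      constructor
      · intro hw
        obtain ⟨u, hu, rfl⟩ := Finset.mem_image.1 hw
        exact Finset.mem_preimage.1 hu
      · intro hw
        have hwy : w ≠ y := fun h => hyB (h ▸ hw)
        have hwz : w ≠ z := fun h => hzB (h ▸ hw)
        obtain ⟨i, rfl⟩ := hsur w hwy hwz
        exact Finset.mem_image_of_mem f (Finset.mem_preimage.2 hw)
    apply mem_PP.2
    refine ⟨⟨?_, ?_, ?_⟩, ?_, ?_⟩
    · intro B hB
      obtain ⟨C, hC, rfl⟩ := Finset.mem_image.1 hB
      have := hFiF C hC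
      obtain ⟨hCne, hCP⟩ := Finset.mem_erase.1 hC
      obtain ⟨w, hw⟩ := hne C hCP
      have hwy : w ≠ y := fun h => (hsubr C hC).1 (h ▸ hw)
      have hwz : w ≠ z := fun h => (hsubr C hC).2 (h ▸ hw)
      obtain ⟨i, rfl⟩ := hsur w hwy hwz
      exact ⟨i, Finset.mem_preimage.2 hw⟩
    · intro i
      obtain ⟨B, hB, hiB⟩ := hcov (f i)
      have hBne : B ≠ ({y, z} : Finset (Fin N)) := by
        intro h
        subst h
        rcases Finset.mem_insert.1 hiB with h2 | h2
        · exact hfy i h2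
        · exact hfz i (Finset.mem_singleton.1 h2)
      refine ⟨Fi B, Finset.mem_image_of_mem Fi (Finset.mem_erase.2 ⟨hBne, hB⟩), ?_⟩
      exact Finset.mem_preimage.2 hiB
    · intro B hB C hC i hiB hiC
      obtain ⟨B', hB', rfl⟩ := Finset.mem_image.1 hB
      obtain ⟨C', hC', rfl⟩ := Finset.mem_image.1 hC
      have h1 : f i ∈ B' := Finset.mem_preimage.1 hiB
      have h2 : f i ∈ C' := Finset.mem_preimage.1 hiC
      rw [hun B' (Finset.mem_erase.1 hB').2 C' (Finset.mem_erase.1 hC').2 _ h1 h2]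
    · intro B hB i hiB j hjB hij heq
      obtain ⟨B', hB', rfl⟩ := Finset.mem_image.1 hB
      have h1 : f i ∈ B' := Finset.mem_preimage.1 hiB
      have h2 : f j ∈ B' := Finset.mem_preimage.1 hjB
      have hfij : f i ≠ f j := fun h => hij (hfi h)
      exact hinh B' (Finset.mem_erase.1 hB').2 _ h1 _ h2 hfij ((hblk i j).1 heq)
    · intro B hB
      obtain ⟨B', hB', rfl⟩ := Finset.mem_image.1 hB
      have : F (Fi B') = B' := hFiF B' hB'
      have hcard : (F (Fi B')).card = (Fi B').card :=
        Finset.card_image_of_injective _ hfi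
      rw [this] at hcard
      rw [← hcard]
      exact hpair B' (Finset.mem_erase.1 hB').2
  case li =>
    intro Q hQ
    have h1 : (insert ({y, z} : Finset (Fin N)) (Q.image F)).erase ({y, z}) = Q.image F := by
      apply Finset.erase_insert
      intro h
      obtain ⟨B, _, hB⟩ := Finset.mem_image.1 h
      exact hpairF B hB.symm
    rw [h1, Finset.image_image]
    have : ∀ B ∈ Q, Fi (F B) = B := by
      intro B _
      ext w
      rw [hFi]
      simp only [Finset.mem_preimage]
      exact hmemF B w
    calc Q.image (Fi ∘ F) = Q.image id := Finset.image_congr (fun B hB => this B hB)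
      _ = Q := Finset.image_id
  case ri =>
    intro P hP
    rw [Finset.mem_filter] at hP
    obtain ⟨hPP, hyzP⟩ := hP
    obtain ⟨⟨hne, hcov, hun⟩, hinh, hpair⟩ := mem_PP.1 hPP
    have hsubr : ∀ B ∈ P.erase ({y, z} : Finset (Fin N)), y ∉ B ∧ z ∉ B := by
      intro B hBe
      obtain ⟨hBne, hB⟩ := Finset.mem_erase.1 hBe
      constructor
      · intro hyB
        exact hBne (hun B hB _ hyzP y hyB (Finset.mem_insert_self _ _))
      · intro hzB
        exact hBne (hun B hB _ hyzP z hzB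
          (Finset.mem_insert_of_mem (Finset.mem_singleton_self _)))
    have hFiF : ∀ B ∈ P.erase ({y, z} : Finset (Fin N)), F (Fi B) = B := by
      intro B hBe
      obtain ⟨hyB, hzB⟩ := hsubr B hBe
      ext w
      constructor
      · intro hw
        obtain ⟨u, hu, rfl⟩ := Finset.mem_image.1 hw
        exact Finset.mem_preimage.1 hu
      · intro hw
        have hwy : w ≠ y := fun h => hyB (h ▸ hw)
        have hwz : w ≠ z := fun h => hzB (h ▸ hw)
        obtain ⟨i, rfl⟩ := hsur w hwy hwz
        exact Finset.mem_image_of_mem f (Finset.mem_preimage.2 hw)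
    rw [Finset.image_image]
    have himg : (P.erase ({y, z} : Finset (Fin N))).image (F ∘ Fi)
        = P.erase ({y, z} : Finset (Fin N)) := by
      calc (P.erase ({y,z} : Finset (Fin N))).image (F ∘ Fi)
          = (P.erase ({y,z} : Finset (Fin N))).image id :=
            Finset.image_congr (fun B hB => hFiF B hB)
        _ = _ := Finset.image_id
    rw [himg, Finset.insert_erase hyzP]

lemma pair_block_eq {α : Type*} [DecidableEq α] {B : Finset α} {i j : α} (h2 : B.card = 2)
    (hi : i ∈ B) (hj : j ∈ B) (hij : i ≠ j) : B = {i, j} := by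
  obtain ⟨u, v, huv, rfl⟩ := Finset.card_eq_two.1 h2
  simp only [Finset.mem_insert, Finset.mem_singleton] at hi hj
  rcases hi with rfl | rfl <;> rcases hj with rfl | rfl
  · exact absurd rfl hij
  · rfl
  · exact Finset.pair_comm _ _
  · exact absurd rfl hij

lemma delete_ID1 (L : List ℕ) (c : ℕ) (z : Fin (L.sum + 1 + c))
    (hz1 : L.sum + 1 ≤ (z : ℕ)) :
    ((PP (L ++ [1, c]) (L.sum + 1 + c)).filter
        (fun P => ({⟨L.sum, by omega⟩, z} : Finset (Fin (L.sum + 1 + c))) ∈ P)).card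
      = (PP (L ++ [c - 1]) (L.sum + (c - 1))).card := by
  have hzlt := z.isLt
  have hc : 1 ≤ c := by omega
  set r := (z : ℕ) - L.sum - 1 with hr
  have hrc : r < c := by omega
  have hzval : (z : ℕ) = L.sum + 1 + r := by omega
  set y : Fin (L.sum + 1 + c) := ⟨L.sum, by omega⟩ with hy
  have hyval : (y : ℕ) = L.sum := rfl
  set f : Fin (L.sum + (c - 1)) → Fin (L.sum + 1 + c) := fun i =>
    ⟨if (i : ℕ) < L.sum then (i : ℕ) else if (i : ℕ) < L.sum + r then (i : ℕ) + 1
      else (i : ℕ) + 2, by have := i.isLt; split_ifs <;> omega⟩ with hf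
  have hval : ∀ i, ((f i) : ℕ) = if (i : ℕ) < L.sum then (i : ℕ)
      else if (i : ℕ) < L.sum + r then (i : ℕ) + 1 else (i : ℕ) + 2 := fun i => rfl
  apply PP_delete_card (ms := L ++ [1, c]) (ms' := L ++ [c - 1]) y z
    (by apply Fin.ne_of_val_ne; omega) f
  · intro a b hab
    have h := congrArg Fin.val hab
    rw [hval, hval] at h
    apply Fin.ext
    split_ifs at h <;> omega
  · intro i h
    have h2 := congrArg Fin.val h
    rw [hval, hyval] at h2
    have := i.isLt
    split_ifs at h2 <;> omega
  · intro i h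
    have h2 := congrArg Fin.val h
    rw [hval, hzval] at h2
    have := i.isLt
    split_ifs at h2 <;> omega
  · intro w hwy hwz
    have hw1 : (w : ℕ) ≠ L.sum := fun h => hwy (Fin.ext (by rw [h, hyval]))
    have hw2 : (w : ℕ) ≠ L.sum + 1 + r := fun h => hwz (Fin.ext (by rw [h, hzval]))
    have hwlt := w.isLt
    refine ⟨⟨if (w : ℕ) < L.sum then (w : ℕ) else if (w : ℕ) < L.sum + 1 + r
      then (w : ℕ) - 1 else (w : ℕ) - 2, by split_ifs <;> omega⟩, ?_⟩
    apply Fin.ext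
    rw [hval]
    simp only []
    split_ifs <;> omega
  · intro i j
    have hvi := i.isLt
    have hvj := j.isLt
    rcases Nat.lt_or_ge (i : ℕ) L.sum with hi | hi <;>
      rcases Nat.lt_or_ge (j : ℕ) L.sum with hj | hj
    · have e1 : ((f i) : ℕ) = (i : ℕ) := by rw [hval, if_pos hi]
      have e2 : ((f j) : ℕ) = (j : ℕ) := by rw [hval, if_pos hj]
      rw [blockIdx_append_eq_iff L ([c - 1]) (i : ℕ) (j : ℕ),
        blockIdx_append_eq_iff L ([1, c]) ((f i) : ℕ) ((f j) : ℕ), e1, e2]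
      omega
    · have e1 : ((f i) : ℕ) = (i : ℕ) := by rw [hval, if_pos hi]
      have hb2 : L.sum + 1 ≤ ((f j) : ℕ) ∧ ((f j) : ℕ) ≤ L.sum + c := by
        rw [hval]; split_ifs <;> omega
      rw [blockIdx_append_eq_iff L ([c - 1]) (i : ℕ) (j : ℕ),
        blockIdx_append_eq_iff L ([1, c]) ((f i) : ℕ) ((f j) : ℕ), e1]
      omega
    · have e2 : ((f j) : ℕ) = (j : ℕ) := by rw [hval, if_pos hj]
      have hb1 : L.sum + 1 ≤ ((f i) : ℕ) ∧ ((f i) : ℕ) ≤ L.sum + c := by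
        rw [hval]; split_ifs <;> omega
      rw [blockIdx_append_eq_iff L ([c - 1]) (i : ℕ) (j : ℕ),
        blockIdx_append_eq_iff L ([1, c]) ((f i) : ℕ) ((f j) : ℕ), e2]
      omega
    · have hb1 : L.sum + 1 ≤ ((f i) : ℕ) ∧ ((f i) : ℕ) ≤ L.sum + c := by
        rw [hval]; split_ifs <;> omega
      have hb2 : L.sum + 1 ≤ ((f j) : ℕ) ∧ ((f j) : ℕ) ≤ L.sum + c := by
        rw [hval]; split_ifs <;> omega
      have v1 : blockIdx ([c - 1]) ((i : ℕ) - L.sum) = 0 := blockIdx_cons_lt (by omega)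
      have v2 : blockIdx ([c - 1]) ((j : ℕ) - L.sum) = 0 := blockIdx_cons_lt (by omega)
      have w1 : blockIdx ([1, c]) (((f i) : ℕ) - L.sum) = 1 := by
        rw [blockIdx_cons_ge (by omega), blockIdx_cons_lt (by omega)]
      have w2 : blockIdx ([1, c]) (((f j) : ℕ) - L.sum) = 1 := by
        rw [blockIdx_cons_ge (by omega), blockIdx_cons_lt (by omega)]
      rw [blockIdx_append_eq_iff L ([c - 1]) (i : ℕ) (j : ℕ),
        blockIdx_append_eq_iff L ([1, c]) ((f i) : ℕ) ((f j) : ℕ), v1, v2, w1, w2]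
      omega
  · have vy : blockIdx (L ++ [1, c]) ((y : ℕ)) = L.length + 0 := by
      rw [hyval, blockIdx_append_right (le_refl _), blockIdx_cons_lt (by omega)]
    have vz : blockIdx (L ++ [1, c]) ((z : ℕ)) = L.length + (1 + 0) := by
      rw [blockIdx_append_right (by omega), blockIdx_cons_ge (by omega),
        blockIdx_cons_lt (by omega)]
    omega

lemma card_ID1 (L : List ℕ) (c : ℕ) :
    (PP (L ++ [1, c]) (L.sum + 1 + c)).card =
      (PP (L ++ [c + 1]) (L.sum + 1 + c)).card
        + c * (PP (L ++ [c - 1]) (L.sum + (c - 1))).card := by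
  set y : Fin (L.sum + 1 + c) := ⟨L.sum, by omega⟩ with hy
  have hyval : (y : ℕ) = L.sum := rfl
  set Z := (univ : Finset (Fin (L.sum + 1 + c))).filter
    (fun z : Fin (L.sum + 1 + c) => L.sum + 1 ≤ (z : ℕ) ∧ (z : ℕ) < L.sum + 1 + c) with hZ
  have hZcard : Z.card = c := card_filter_interval (by omega)
  rw [← Finset.card_filter_add_card_filter_not
    (p := fun P => ∃ z ∈ Z, ({y, z} : Finset (Fin (L.sum + 1 + c))) ∈ P)
    (s := PP (L ++ [1, c]) (L.sum + 1 + c))]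
  have hneg : (PP (L ++ [1, c]) (L.sum + 1 + c)).filter
      (fun P => ¬ ∃ z ∈ Z, ({y, z} : Finset (Fin (L.sum + 1 + c))) ∈ P)
      = PP (L ++ [c + 1]) (L.sum + 1 + c) := by
    ext P
    simp only [Finset.mem_filter, mem_PP]
    constructor
    · rintro ⟨⟨hpart, hinh, hpair⟩, hnoz⟩
      refine ⟨hpart, ?_, hpair⟩
      have hm := inhom_merge (N := L.sum + 1 + c) L 1 c ([]) P
      simp only [List.append_nil] at hm
      rw [show (1 : ℕ) + c = c + 1 by omega] at hm
      rw [hm]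
      refine ⟨hinh, ?_⟩
      intro B hB i hiB j hjB hcross
      obtain ⟨hi1, hi2, hj1, hj2⟩ := hcross
      have hiy : i = y := Fin.ext (by rw [hyval]; omega)
      have hij : i ≠ j := Fin.ne_of_val_ne (by omega)
      have hBij : B = {y, j} := by
        rw [← hiy]
        exact pair_block_eq (hpair B hB) hiB hjB hij
      apply hnoz
      refine ⟨j, ?_, hBij ▸ hB⟩
      simp only [hZ, Finset.mem_filter, Finset.mem_univ, true_and]
      exact ⟨hj1, hj2⟩
    · rintro ⟨hpart, hinh, hpair⟩
      have hm := inhom_merge (N := L.sum + 1 + c) L 1 c ([]) P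
      simp only [List.append_nil] at hm
      rw [show (1 : ℕ) + c = c + 1 by omega] at hm
      rw [hm] at hinh
      obtain ⟨hinh1, hcross⟩ := hinh
      refine ⟨⟨hpart, hinh1, hpair⟩, ?_⟩
      rintro ⟨z, hzZ, hzP⟩
      simp only [hZ, Finset.mem_filter, Finset.mem_univ, true_and] at hzZ
      exact hcross _ hzP y (Finset.mem_insert_self _ _) z
        (Finset.mem_insert_of_mem (Finset.mem_singleton_self _))
        ⟨by rw [hyval], by rw [hyval]; omega, by omega, by omega⟩
  rw [hneg]
  have hpos : ((PP (L ++ [1, c]) (L.sum + 1 + c)).filter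
      (fun P => ∃ z ∈ Z, ({y, z} : Finset (Fin (L.sum + 1 + c))) ∈ P)).card
      = c * (PP (L ++ [c - 1]) (L.sum + (c - 1))).card := by
    rw [card_biUnion_partner]
    rw [Finset.sum_congr rfl (fun z hz => by
      have hzZ : L.sum + 1 ≤ (z : ℕ) := by
        simp only [hZ, Finset.mem_filter, Finset.mem_univ, true_and] at hz
        exact hz.1
      exact delete_ID1 L c z hzZ)]
    rw [Finset.sum_const, hZcard, smul_eq_mul]
  rw [hpos]
  omega

lemma delete_ID2 (L : List ℕ) (b c : ℕ) (z : Fin (L.sum + b + c + 2))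
    (hz1 : L.sum ≤ (z : ℕ)) (hz2 : (z : ℕ) < L.sum + b + 1) :
    ((PP (L ++ [b + 1, 1, c]) (L.sum + b + c + 2)).filter
        (fun P => ({⟨L.sum + b + 1, by omega⟩, z} : Finset (Fin (L.sum + b + c + 2))) ∈ P)).card
      = (PP (L ++ [b, c]) (L.sum + b + c)).card := by
  set r := (z : ℕ) - L.sum with hr
  have hrb : r < b + 1 := by omega
  have hzval : (z : ℕ) = L.sum + r := by omega
  set y : Fin (L.sum + b + c + 2) := ⟨L.sum + b + 1, by omega⟩ with hy
  have hyval : (y : ℕ) = L.sum + b + 1 := rfl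
  set f : Fin (L.sum + b + c) → Fin (L.sum + b + c + 2) := fun i =>
    ⟨if (i : ℕ) < L.sum + r then (i : ℕ) else if (i : ℕ) < L.sum + b then (i : ℕ) + 1
      else (i : ℕ) + 2, by have := i.isLt; split_ifs <;> omega⟩ with hf
  have hval : ∀ i, ((f i) : ℕ) = if (i : ℕ) < L.sum + r then (i : ℕ)
      else if (i : ℕ) < L.sum + b then (i : ℕ) + 1 else (i : ℕ) + 2 := fun i => rfl
  have key : ∀ u : Fin (L.sum + b + c),
      (blockIdx (L ++ [b, c]) (u : ℕ) = blockIdx L (u : ℕ) ∧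
        blockIdx (L ++ [b + 1, 1, c]) ((f u) : ℕ) = blockIdx L (u : ℕ) ∧
        (u : ℕ) < L.sum ∧ blockIdx L (u : ℕ) < L.length) ∨
      (blockIdx (L ++ [b, c]) (u : ℕ) = L.length + 0 ∧
        blockIdx (L ++ [b + 1, 1, c]) ((f u) : ℕ) = L.length + 0 ∧
        L.sum ≤ (u : ℕ) ∧ (u : ℕ) < L.sum + b) ∨
      (blockIdx (L ++ [b, c]) (u : ℕ) = L.length + (1 + 0) ∧
        blockIdx (L ++ [b + 1, 1, c]) ((f u) : ℕ) = L.length + (1 + (1 + 0)) ∧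
        L.sum + b ≤ (u : ℕ)) := by
    intro u
    have hu := u.isLt
    rcases Nat.lt_or_ge (u : ℕ) L.sum with h1 | h1
    · left
      have e : ((f u) : ℕ) = (u : ℕ) := by rw [hval, if_pos (by omega)]
      refine ⟨blockIdx_append_left h1, ?_, h1, blockIdx_lt h1⟩
      rw [e]
      exact blockIdx_append_left h1
    rcases Nat.lt_or_ge (u : ℕ) (L.sum + b) with h2 | h2
    · right; left
      have e : L.sum ≤ ((f u) : ℕ) ∧ ((f u) : ℕ) < L.sum + b + 1 := by
        rw [hval]; split_ifs <;> omega
      refine ⟨?_, ?_, h1, h2⟩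
      · rw [blockIdx_append_right h1, blockIdx_cons_lt (by omega)]
      · rw [blockIdx_append_right e.1, blockIdx_cons_lt (by omega)]
    · right; right
      have e : ((f u) : ℕ) = (u : ℕ) + 2 := by
        rw [hval, if_neg (by omega), if_neg (by omega)]
      refine ⟨?_, ?_, h2⟩
      · rw [blockIdx_append_right h1, blockIdx_cons_ge (by omega),
          blockIdx_cons_lt (by omega)]
      · rw [e, blockIdx_append_right (by omega : L.sum ≤ (u : ℕ) + 2),
          blockIdx_cons_ge (by omega), blockIdx_cons_ge (by omega),
          blockIdx_cons_lt (by omega)]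
  apply PP_delete_card (ms := L ++ [b + 1, 1, c]) (ms' := L ++ [b, c]) y z
    (by apply Fin.ne_of_val_ne; omega) f
  · intro a1 a2 hab
    have h := congrArg Fin.val hab
    rw [hval, hval] at h
    apply Fin.ext
    split_ifs at h <;> omega
  · intro i h
    have h2 := congrArg Fin.val h
    rw [hval, hyval] at h2
    have := i.isLt
    split_ifs at h2 <;> omega
  · intro i h
    have h2 := congrArg Fin.val h
    rw [hval, hzval] at h2
    have := i.isLt
    split_ifs at h2 <;> omega
  · intro w hwy hwz
    have hw1 : (w : ℕ) ≠ L.sum + b + 1 := fun h => hwy (Fin.ext (by rw [h, hyval]))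
    have hw2 : (w : ℕ) ≠ L.sum + r := fun h => hwz (Fin.ext (by rw [h, hzval]))
    have hwlt := w.isLt
    refine ⟨⟨if (w : ℕ) < L.sum + r then (w : ℕ) else if (w : ℕ) < L.sum + b + 1
      then (w : ℕ) - 1 else (w : ℕ) - 2, by split_ifs <;> omega⟩, ?_⟩
    apply Fin.ext
    rw [hval]
    simp only []
    split_ifs <;> omega
  · intro i j
    have k1 := key i
    have k2 := key j
    omega
  · have vy : blockIdx (L ++ [b + 1, 1, c]) ((y : ℕ)) = L.length + (1 + 0) := by
      rw [hyval, blockIdx_append_right (by omega), blockIdx_cons_ge (by omega),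
        blockIdx_cons_lt (by omega)]
    rcases Nat.lt_or_ge (z : ℕ) L.sum with h1 | h1
    · have vz : blockIdx (L ++ [b + 1, 1, c]) ((z : ℕ)) = blockIdx L (z : ℕ) :=
        blockIdx_append_left h1
      have := blockIdx_lt (L := L) h1
      omega
    · have vz : blockIdx (L ++ [b + 1, 1, c]) ((z : ℕ)) = L.length + 0 := by
        rw [blockIdx_append_right h1, blockIdx_cons_lt (by omega)]
      omega

lemma card_ID2 (L : List ℕ) (b c : ℕ) :
    (PP (L ++ [b + 1, 1, c]) (L.sum + b + c + 2)).card =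
      (PP (L ++ [b + 2, c]) (L.sum + b + c + 2)).card
        + (b + 1) * (PP (L ++ [b, c]) (L.sum + b + c)).card := by
  set y : Fin (L.sum + b + c + 2) := ⟨L.sum + b + 1, by omega⟩ with hy
  have hyval : (y : ℕ) = L.sum + b + 1 := rfl
  set Z := (univ : Finset (Fin (L.sum + b + c + 2))).filter
    (fun z : Fin (L.sum + b + c + 2) => L.sum ≤ (z : ℕ) ∧ (z : ℕ) < L.sum + (b + 1)) with hZ
  have hZcard : Z.card = b + 1 := card_filter_interval (by omega)
  rw [← Finset.card_filter_add_card_filter_not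
    (p := fun P => ∃ z ∈ Z, ({y, z} : Finset (Fin (L.sum + b + c + 2))) ∈ P)
    (s := PP (L ++ [b + 1, 1, c]) (L.sum + b + c + 2))]
  have hmm0 : ∀ P : Finset (Finset (Fin (L.sum + b + c + 2))),
      Inhom (L ++ [b + 2, c]) P ↔ Inhom (L ++ [b + 1, 1, c]) P ∧
        ∀ B ∈ P, ∀ i ∈ B, ∀ j ∈ B,
          ¬(L.sum ≤ (i : ℕ) ∧ (i : ℕ) < L.sum + (b + 1) ∧
            L.sum + (b + 1) ≤ (j : ℕ) ∧ (j : ℕ) < L.sum + (b + 1) + 1) := by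
    intro P
    have hm := inhom_merge (N := L.sum + b + c + 2) L (b + 1) 1 ([c]) P
    simp only [List.append_assoc, List.cons_append, List.singleton_append, List.nil_append] at hm
    rw [show b + 1 + 1 = b + 2 by omega] at hm
    exact hm
  have hneg : (PP (L ++ [b + 1, 1, c]) (L.sum + b + c + 2)).filter
      (fun P => ¬ ∃ z ∈ Z, ({y, z} : Finset (Fin (L.sum + b + c + 2))) ∈ P)
      = PP (L ++ [b + 2, c]) (L.sum + b + c + 2) := by
    ext P
    simp only [Finset.mem_filter, mem_PP]
    constructor
    · rintro ⟨⟨hpart, hinh, hpair⟩, hnoz⟩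
      refine ⟨hpart, ?_, hpair⟩
      rw [hmm0 P]
      refine ⟨hinh, ?_⟩
      intro B hB i hiB j hjB hcross
      obtain ⟨hi1, hi2, hj1, hj2⟩ := hcross
      have hjy : j = y := Fin.ext (by rw [hyval]; omega)
      have hij : j ≠ i := Fin.ne_of_val_ne (by omega)
      have hBij : B = {y, i} := by
        rw [← hjy]
        exact pair_block_eq (hpair B hB) hjB hiB hij
      apply hnoz
      refine ⟨i, ?_, hBij ▸ hB⟩
      simp only [hZ, Finset.mem_filter, Finset.mem_univ, true_and]
      exact ⟨hi1, hi2⟩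
    · rintro ⟨hpart, hinh, hpair⟩
      rw [hmm0 P] at hinh
      obtain ⟨hinh1, hcross⟩ := hinh
      refine ⟨⟨hpart, hinh1, hpair⟩, ?_⟩
      rintro ⟨z, hzZ, hzP⟩
      simp only [hZ, Finset.mem_filter, Finset.mem_univ, true_and] at hzZ
      exact hcross _ hzP z
        (Finset.mem_insert_of_mem (Finset.mem_singleton_self _)) y
        (Finset.mem_insert_self _ _)
        ⟨by omega, by omega, by rw [hyval]; omega, by rw [hyval]; omega⟩
  rw [hneg]
  have hpos : ((PP (L ++ [b + 1, 1, c]) (L.sum + b + c + 2)).filter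
      (fun P => ∃ z ∈ Z, ({y, z} : Finset (Fin (L.sum + b + c + 2))) ∈ P)).card
      = (b + 1) * (PP (L ++ [b, c]) (L.sum + b + c)).card := by
    rw [card_biUnion_partner]
    rw [Finset.sum_congr rfl (fun z hz => by
      have hzZ : L.sum ≤ (z : ℕ) ∧ (z : ℕ) < L.sum + (b + 1) := by
        simpa only [hZ, Finset.mem_filter, Finset.mem_univ, true_and] using hz
      exact delete_ID2 L b c z hzZ.1 (by omega))]
    rw [Finset.sum_const, hZcard, smul_eq_mul]
  rw [hpos]
  omega

def AA (ms : List ℕ) (m : ℕ) : ℕ := (PP (ms ++ [m]) (ms.sum + m)).card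

lemma PP_congr {ms1 ms2 : List ℕ} {N1 N2 : ℕ} (hms : ms1 = ms2) (hN : N1 = N2) :
    (PP ms1 N1).card = (PP ms2 N2).card := by
  rw [hms]
  exact PP_card_congr _ hN

lemma AA_eq_zero {L : List ℕ} {m : ℕ} (hm : L.sum < m) : AA L m = 0 := by
  unfold AA
  rw [PP_eq_empty rfl hm, Finset.card_empty]

lemma AA_I1 (L : List ℕ) (m : ℕ) :
    AA (L ++ [1]) m = AA L (m + 1) + m * AA L (m - 1) := by
  unfold AA
  have h1 : (L ++ [1]) ++ [m] = L ++ [1, m] := by simp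
  have h2 : (L ++ [1]).sum + m = L.sum + 1 + m := by simp
  rw [PP_congr h1 h2, card_ID1 L m]
  have h3 := PP_congr (ms1 := L ++ [m + 1]) rfl (show L.sum + 1 + m = L.sum + (m + 1) by omega)
  omega


lemma AA_I2 (L : List ℕ) (b m : ℕ) :
    AA (L ++ [b + 1, 1]) m = AA (L ++ [b + 2]) m + (b + 1) * AA (L ++ [b]) m := by
  unfold AA
  have h1 : (L ++ [b + 1, 1]) ++ [m] = L ++ [b + 1, 1, m] := by simp
  have h2 : (L ++ [b + 1, 1]).sum + m = L.sum + b + m + 2 := by simp; omega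
  rw [PP_congr h1 h2, card_ID2 L b m]
  congr 1
  · exact PP_congr (by simp) (by simp <;> omega)
  · congr 1
    exact PP_congr (by simp) (by simp <;> omega)

lemma AA_I0 (L : List ℕ) (m : ℕ) : AA (L ++ [0]) m = AA L m := by
  unfold AA
  have h2 : (L ++ [0]).sum + m = L.sum + m := by simp
  rw [PP_congr rfl h2]
  congr 1
  unfold PP
  apply Finset.filter_congr
  intro P _
  have h := inhom_zero_mid (N := L.sum + m) L ([m]) P
  constructor
  · rintro ⟨h1, h2, h3⟩
    exact ⟨h1, h.1 h2, h3⟩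
  · rintro ⟨h1, h2, h3⟩
    exact ⟨h1, h.2 h2, h3⟩

lemma PP_card_zero (ms : List ℕ) : (PP ms 0).card = 1 := by
  have h : PP ms 0 = {∅} := by
    ext P
    simp only [mem_PP, Finset.mem_singleton]
    constructor
    · rintro ⟨⟨hne, _, _⟩, _, _⟩
      rw [Finset.eq_empty_iff_forall_notMem]
      intro B hB
      obtain ⟨w, _⟩ := hne B hB
      exact w.elim0
    · rintro rfl
      refine ⟨⟨?_, ?_, ?_⟩, ?_, ?_⟩
      · intro B hB; exact absurd hB (Finset.notMem_empty _)
      · intro i; exact i.elim0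
      · intro B hB; exact absurd hB (Finset.notMem_empty _)
      · intro B hB; exact absurd hB (Finset.notMem_empty _)
      · intro B hB; exact absurd hB (Finset.notMem_empty _)
  rw [h, Finset.card_singleton]

lemma herm_def2 (x t : ℝ) (m : ℕ) : hermiteP x t (m + 2)
    = x * hermiteP x t (m + 1) - ((m : ℝ) + 1) * t * hermiteP x t m := rfl

lemma herm_mul (x t : ℝ) (m : ℕ) :
    x * hermiteP x t m = hermiteP x t (m + 1) + (m : ℝ) * t * hermiteP x t (m - 1) := by
  cases m with
  | zero => simp [hermiteP]
  | succ m =>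
    show x * hermiteP x t (m + 1)
      = hermiteP x t (m + 2) + ((m + 1 : ℕ) : ℝ) * t * hermiteP x t m
    rw [herm_def2]
    push_cast
    ring

lemma hsq {t : ℝ} (ht : 0 ≤ t) (k : ℕ) :
    Real.sqrt t ^ (k + 2) = Real.sqrt t ^ k * t := by
  rw [pow_add, Real.sq_sqrt ht]

lemma fact_ne {m : ℕ} : ((Nat.factorial m : ℕ) : ℝ) ≠ 0 :=
  Nat.cast_ne_zero.2 (Nat.factorial_ne_zero m)

lemma coeff1 {t : ℝ} (ht : 0 ≤ t) (L : List ℕ) (m : ℕ) :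
    (1 / (Nat.factorial m : ℝ)) * Real.sqrt t ^ (L.sum + 1 - m) * (AA (L ++ [1]) m : ℝ) =
      (if m = 0 then 0 else
        (1 / (Nat.factorial (m - 1) : ℝ)) * Real.sqrt t ^ (L.sum - (m - 1)) * (AA L (m - 1) : ℝ))
      + ((m : ℝ) + 1) * t *
        ((1 / (Nat.factorial (m + 1) : ℝ)) * Real.sqrt t ^ (L.sum - (m + 1)) * (AA L (m + 1) : ℝ)) := by
  rw [AA_I1]
  cases m with
  | zero =>
    simp only [if_pos rfl, Nat.zero_sub, Nat.cast_add, Nat.cast_mul, Nat.cast_zero,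
      Nat.factorial, Nat.cast_one, zero_add, zero_mul, add_zero, Nat.cast_ofNat]
    rcases Nat.eq_zero_or_pos L.sum with h0 | h0
    · have hz : AA L 1 = 0 := AA_eq_zero (by omega)
      rw [hz]
      push_cast
      ring
    · have he : L.sum + 1 - 0 = (L.sum - 1) + 2 := by omega
      rw [he, hsq ht]
      push_cast
      ring
  | succ k =>
    simp only [if_neg (Nat.succ_ne_zero k), Nat.succ_sub_one]
    rcases Nat.lt_or_ge L.sum (k + 2) with hc | hc
    · have hz : AA L (k + 1 + 1) = 0 := AA_eq_zero (by omega)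
      rw [hz]
      have he : L.sum + 1 - (k + 1) = L.sum - k := by omega
      rw [he]
      rw [Nat.factorial_succ (k)]
      push_cast
      have hk := fact_ne (m := k)
      field_simp
      ring
    · have he : L.sum + 1 - (k + 1) = L.sum - k := by omega
      have he2 : L.sum - k = (L.sum - (k + 1 + 1)) + 2 := by omega
      rw [he, he2, hsq ht, Nat.factorial_succ k, Nat.factorial_succ (k + 1),
        Nat.factorial_succ k]
      push_cast
      have hk := fact_ne (m := k)
      field_simp
      ring

lemma coeff2 {t : ℝ} (ht : 0 ≤ t) (L : List ℕ) (b m : ℕ) :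
    (1 / (Nat.factorial m : ℝ)) * Real.sqrt t ^ (L.sum + b + 2 - m) * (AA (L ++ [b + 1, 1]) m : ℝ) =
      (1 / (Nat.factorial m : ℝ)) * Real.sqrt t ^ (L.sum + b + 2 - m) * (AA (L ++ [b + 2]) m : ℝ)
      + ((b : ℝ) + 1) * t *
        ((1 / (Nat.factorial m : ℝ)) * Real.sqrt t ^ (L.sum + b - m) * (AA (L ++ [b]) m : ℝ)) := by
  rw [AA_I2]
  rcases Nat.lt_or_ge (L.sum + b) m with hc | hc
  · have hz : AA (L ++ [b]) m = 0 := AA_eq_zero (by simp; omega)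
    rw [hz]
    push_cast
    ring
  · have he : L.sum + b + 2 - m = (L.sum + b - m) + 2 := by omega
    rw [he, hsq ht]
    push_cast
    ring

lemma main_nil (x t : ℝ) :
    (([] : List ℕ).map (hermiteP x t)).prod =
      ∑ m ∈ Finset.range (([] : List ℕ).sum + 1),
        (1 / (Nat.factorial m : ℝ)) * Real.sqrt t ^ (([] : List ℕ).sum - m) *
          (AA [] m : ℝ) * hermiteP x t m := by
  have h0 : AA ([] : List ℕ) 0 = 1 := by
    unfold AA
    rw [PP_card_congr _ (show (([] : List ℕ).sum + 0) = 0 by simp)]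
    exact PP_card_zero _
  simp [Finset.sum_range_one, h0, show hermiteP x t 0 = 1 from rfl]

lemma main_aux (x t : ℝ) (ht : 0 ≤ t) :
    ∀ k : ℕ, ∀ ms : List ℕ, 2 * (ms.map (fun n => n * n)).sum + ms.length ≤ k →
      (ms.map (hermiteP x t)).prod =
        ∑ m ∈ Finset.range (ms.sum + 1),
          (1 / (Nat.factorial m : ℝ)) * Real.sqrt t ^ (ms.sum - m) * (AA ms m : ℝ) *
            hermiteP x t m := by
  intro k
  induction k with
  | zero =>
    intro ms hms
    have hnil : ms = [] := by
      cases ms with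
      | nil => rfl
      | cons a l => simp at hms
    subst hnil
    exact main_nil x t
  | succ k IH =>
    intro ms hms
    rcases List.eq_nil_or_concat ms with rfl | ⟨L, a, rfl⟩
    · exact main_nil x t
    rw [List.concat_eq_append] at hms ⊢
    have htri : a = 0 ∨ a = 1 ∨ ∃ b, a = b + 2 := by
      rcases a with _ | (_ | b)
      · exact Or.inl rfl
      · exact Or.inr (Or.inl rfl)
      · exact Or.inr (Or.inr ⟨b, rfl⟩)
    rcases htri with rfl | rfl | ⟨b, rfl⟩
    · -- a = 0
      have h1 : ((L ++ [0]).map (fun n => n * n)).sum = (L.map (fun n => n * n)).sum := by simp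
      have h2 : (L ++ [0]).length = L.length + 1 := by simp
      rw [h1, h2] at hms
      have hsum0 : (L ++ [0]).sum = L.sum := by simp
      have hprod : ((L ++ [0]).map (hermiteP x t)).prod = (L.map (hermiteP x t)).prod := by
        simp [show hermiteP x t 0 = 1 from rfl]
      rw [hprod, IH L (by omega)]
      apply Finset.sum_congr
      · rw [hsum0]
      · intro m _
        rw [hsum0, AA_I0]
    · -- a = 1
      have h1 : ((L ++ [1]).map (fun n => n * n)).sum = (L.map (fun n => n * n)).sum + 1 := by
        simp
      have h2 : (L ++ [1]).length = L.length + 1 := by simp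
      rw [h1, h2] at hms
      have hIH := IH L (by omega)
      have hsum1 : (L ++ [1]).sum = L.sum + 1 := by simp
      have hprod : ((L ++ [1]).map (hermiteP x t)).prod
          = (L.map (hermiteP x t)).prod * x := by
        simp [show hermiteP x t 1 = x from rfl]
      rw [hprod, hIH, Finset.sum_mul]
      have hterm : ∀ m ∈ Finset.range (L.sum + 1),
          (1 / (Nat.factorial m : ℝ)) * Real.sqrt t ^ (L.sum - m) * (AA L m : ℝ) *
              hermiteP x t m * x
            = (1 / (Nat.factorial m : ℝ)) * Real.sqrt t ^ (L.sum - m) * (AA L m : ℝ) *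
                hermiteP x t (m + 1)
              + (1 / (Nat.factorial m : ℝ)) * Real.sqrt t ^ (L.sum - m) * (AA L m : ℝ) *
                ((m : ℝ) * t * hermiteP x t (m - 1)) := by
        intro m _
        have hh := herm_mul x t m
        calc (1 / (Nat.factorial m : ℝ)) * Real.sqrt t ^ (L.sum - m) * (AA L m : ℝ) *
              hermiteP x t m * x
            = (1 / (Nat.factorial m : ℝ)) * Real.sqrt t ^ (L.sum - m) * (AA L m : ℝ) *
              (x * hermiteP x t m) := by ring
          _ = _ := by rw [hh]; ring
      rw [Finset.sum_congr rfl hterm, Finset.sum_add_distrib]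
      have hS1 : ∑ m ∈ Finset.range (L.sum + 1),
          (1 / (Nat.factorial m : ℝ)) * Real.sqrt t ^ (L.sum - m) * (AA L m : ℝ) *
            hermiteP x t (m + 1)
          = ∑ m ∈ Finset.range (L.sum + 1 + 1),
            (if m = 0 then 0 else
              (1 / (Nat.factorial (m - 1) : ℝ)) * Real.sqrt t ^ (L.sum - (m - 1)) *
                (AA L (m - 1) : ℝ)) * hermiteP x t m := by
        rw [Finset.sum_range_succ' (fun m => (if m = 0 then (0:ℝ) else
          (1 / (Nat.factorial (m - 1) : ℝ)) * Real.sqrt t ^ (L.sum - (m - 1)) *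
            (AA L (m - 1) : ℝ)) * hermiteP x t m) (L.sum + 1)]
        simp
      have hS2 : ∑ m ∈ Finset.range (L.sum + 1),
          (1 / (Nat.factorial m : ℝ)) * Real.sqrt t ^ (L.sum - m) * (AA L m : ℝ) *
            ((m : ℝ) * t * hermiteP x t (m - 1))
          = ∑ m ∈ Finset.range (L.sum + 1 + 1),
            (((m : ℝ) + 1) * t *
              ((1 / (Nat.factorial (m + 1) : ℝ)) * Real.sqrt t ^ (L.sum - (m + 1)) *
                (AA L (m + 1) : ℝ))) * hermiteP x t m := by
        rw [Finset.sum_range_succ' (fun m =>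
          (1 / (Nat.factorial m : ℝ)) * Real.sqrt t ^ (L.sum - m) * (AA L m : ℝ) *
            ((m : ℝ) * t * hermiteP x t (m - 1))) L.sum]
        rw [Finset.sum_range_succ (fun m => (((m : ℝ) + 1) * t *
              ((1 / (Nat.factorial (m + 1) : ℝ)) * Real.sqrt t ^ (L.sum - (m + 1)) *
                (AA L (m + 1) : ℝ))) * hermiteP x t m) (L.sum + 1)]
        rw [Finset.sum_range_succ (fun m => (((m : ℝ) + 1) * t *
              ((1 / (Nat.factorial (m + 1) : ℝ)) * Real.sqrt t ^ (L.sum - (m + 1)) *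
                (AA L (m + 1) : ℝ))) * hermiteP x t m) L.sum]
        have z1 : AA L (L.sum + 1) = 0 := AA_eq_zero (by omega)
        have z2 : AA L (L.sum + 1 + 1) = 0 := AA_eq_zero (by omega)
        rw [z1, z2]
        simp only [Nat.cast_zero, zero_mul, mul_zero, zero_add, add_zero, Nat.cast_add,
          Nat.cast_one, Nat.cast_succ]
        apply Finset.sum_congr rfl
        intro i _
        push_cast [Nat.add_sub_cancel]
        ring
      rw [hS1, hS2, ← Finset.sum_add_distrib, hsum1]
      apply Finset.sum_congr rfl
      intro m _
      rw [coeff1 ht L m]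
      ring
    · -- a = b + 2
      have h1 : ((L ++ [b + 2]).map (fun n => n * n)).sum
          = (L.map (fun n => n * n)).sum + (b + 2) * (b + 2) := by simp
      have h2 : (L ++ [b + 2]).length = L.length + 1 := by simp
      rw [h1, h2] at hms
      have hmu1 : 2 * ((L ++ [b + 1, 1]).map (fun n => n * n)).sum
          + (L ++ [b + 1, 1]).length ≤ k := by
        have e1 : ((L ++ [b + 1, 1]).map (fun n => n * n)).sum
            = (L.map (fun n => n * n)).sum + ((b + 1) * (b + 1) + 1) := by
          simp <;> omega
        have e2 : (L ++ [b + 1, 1]).length = L.length + 2 := by simp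
        rw [e1, e2]
        nlinarith [hms]
      have hmu2 : 2 * ((L ++ [b]).map (fun n => n * n)).sum + (L ++ [b]).length ≤ k := by
        have e1 : ((L ++ [b]).map (fun n => n * n)).sum
            = (L.map (fun n => n * n)).sum + b * b := by simp
        have e2 : (L ++ [b]).length = L.length + 1 := by simp
        rw [e1, e2]
        nlinarith [hms]
      have hIH1 := IH (L ++ [b + 1, 1]) hmu1
      have hIH2 := IH (L ++ [b]) hmu2
      have hs1 : (L ++ [b + 1, 1]).sum = L.sum + b + 2 := by simp <;> omega
      have hs2 : (L ++ [b]).sum = L.sum + b := by simp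
      have hs3 : (L ++ [b + 2]).sum = L.sum + b + 2 := by simp <;> omega
      rw [hs1] at hIH1
      rw [hs2] at hIH2
      have hprod : ((L ++ [b + 2]).map (hermiteP x t)).prod
          = ((L ++ [b + 1, 1]).map (hermiteP x t)).prod
            - ((b : ℝ) + 1) * t * ((L ++ [b]).map (hermiteP x t)).prod := by
        simp only [List.map_append, List.prod_append, List.map_cons, List.map_nil,
          List.prod_cons, List.prod_nil]
        rw [herm_def2, show hermiteP x t 1 = x from rfl]
        ring
      rw [hprod, hIH1, hIH2, hs3]
      have hext : ∑ m ∈ Finset.range (L.sum + b + 1),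
          (1 / (Nat.factorial m : ℝ)) * Real.sqrt t ^ (L.sum + b - m) *
            (AA (L ++ [b]) m : ℝ) * hermiteP x t m
          = ∑ m ∈ Finset.range (L.sum + b + 2 + 1),
          (1 / (Nat.factorial m : ℝ)) * Real.sqrt t ^ (L.sum + b - m) *
            (AA (L ++ [b]) m : ℝ) * hermiteP x t m := by
        have e : L.sum + b + 2 + 1 = (L.sum + b + 1) + 1 + 1 := by omega
        conv_rhs => rw [e, Finset.sum_range_succ, Finset.sum_range_succ]
        have z1 : AA (L ++ [b]) (L.sum + b + 1) = 0 := by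
          apply AA_eq_zero
          simp <;> omega
        have z2 : AA (L ++ [b]) (L.sum + b + 1 + 1) = 0 := by
          apply AA_eq_zero
          simp <;> omega
        rw [z1, z2]
        push_cast
        ring
      rw [hext, Finset.mul_sum, ← Finset.sum_sub_distrib]
      apply Finset.sum_congr rfl
      intro m _
      rw [coeff2 ht L b m]
      ring

/-- Expansion of a product of Hermite polynomials in the Hermite basis. -/
theorem statement2 (x t : ℝ) (ht : 0 ≤ t) (ns : List ℕ) (hne : ns ≠ [])
    (hpos : ∀ m ∈ ns, 0 < m) :
    (ns.map (hermiteP x t)).prod =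
      ∑ m ∈ Finset.range (ns.sum + 1),
        (1 / (Nat.factorial m : ℝ)) * Real.sqrt t ^ (ns.sum - m) *
          (((univ : Finset (Finset (Finset (Fin (ns ++ [m]).sum)))).filter
              (fun P => IsPartition P ∧ Inhom (ns ++ [m]) P ∧
                ∀ B ∈ P, B.card = 2)).card : ℝ) *
          hermiteP x t m := by
  rw [main_aux x t ht (2 * (ns.map (fun n => n * n)).sum + ns.length) ns le_rfl]
  apply Finset.sum_congr rfl
  intro m _
  have h : AA ns m = ((univ : Finset (Finset (Finset (Fin (ns ++ [m]).sum)))).filter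
      (fun P => IsPartition P ∧ Inhom (ns ++ [m]) P ∧ ∀ B ∈ P, B.card = 2)).card := by
    unfold AA
    exact PP_card_congr _ (by simp)
  rw [h]
end
end
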